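/- arXiv:1309.4194 — 2 statements merged into one kernel-verified Lean document; each statement's English description precedes it below -/
import Mathlib

section
/- Let r ≥ 1 and d ≥ 1 be integers, and let Φ : (ℰ⁺)^d → (ℰ⁺)^d be an additive map which is φ-semilinear, i.e. Φ(s·x) = φ(s)·Φ(x) for all s ∈ ℰ⁺ and all x ∈ (ℰ⁺)^d. Let 𝔐 ⊆ (ℰ⁺)^d be an 𝔖-submodule which is free of rank d as an 𝔖-module, stable under Φ, spans (ℰ⁺)^d as an ℰ⁺-module, and satisfies E(u)^r·𝔐 ⊆ ⟨Φ(𝔐)⟩_𝔖, the 𝔖-submodule generated by Φ(𝔐) (so 𝔐 is a Breuil–Kisin module of height ≤ r). Let 𝔐' ⊆ (ℰ⁺)^d be another 𝔖-submodule which is free of finite rank as an 𝔖-module, stable under Φ, and spans (ℰ⁺)^d as an ℰ⁺-module. Then E(u)^r·𝔐' ⊆ ⟨Φ(𝔐')⟩_𝔖; i.e. 𝔐' is also a Breuil–Kisin module of height ≤ r. -/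
noncomputable section

open PowerSeries

variable (p : ℕ) [hp : Fact p.Prime] (k : Type) [Field k] [CharP k p] [PerfectRing k p]

/-- `K₀`, the fraction field of the ring of Witt vectors `W(k)`. -/
abbrev K₀ : Type := FractionRing (WittVector p k)

/-- The inclusion `O_{K₀} = W(k) → K₀`. -/
def ι : WittVector p k →+* K₀ p k := algebraMap _ _

/-- `valGE c a` says `val a ≥ c`, for the valuation `val` on `K₀` normalized by `val p = 1`
(whose ring of integers is `W(k)`). -/
def valGE (c : ℝ) (a : K₀ p k) : Prop :=
  ∃ w : WittVector p k, a = (p : K₀ p k) ^ ⌈c⌉ * ι p k w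

/-- Membership in `𝔖_ν`: all coefficients satisfy `val (a i) + ν·i ≥ 0`. -/
def memS (ν : ℝ) (f : PowerSeries (K₀ p k)) : Prop :=
  ∀ i : ℕ, valGE p k (-(ν * i)) (PowerSeries.coeff (R := K₀ p k) i f)

/-- Membership in `ℰ⁺_ν = 𝔖_ν[1/p]`. -/
def memE (ν : ℝ) (f : PowerSeries (K₀ p k)) : Prop :=
  ∃ n : ℕ, memS p k ν (PowerSeries.C (R := K₀ p k) ((p : K₀ p k) ^ n) * f)

/-- The Frobenius `σ` on `K₀`, extending the Witt vector Frobenius. -/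
def σ : K₀ p k →+* K₀ p k :=
  IsFractionRing.lift (g := (ι p k).comp (WittVector.frobeniusEquiv p k).toRingHom)
    (by rw [RingHom.coe_comp]
        exact (IsFractionRing.injective (WittVector p k) (K₀ p k)).comp
          (WittVector.frobeniusEquiv p k).injective)

/-- The Frobenius `φ` on `K₀[[u]]`: `Σ a_i u^i ↦ Σ σ(a_i) u^{p·i}`. -/
def φps (f : PowerSeries (K₀ p k)) : PowerSeries (K₀ p k) :=
  PowerSeries.mk fun i => if p ∣ i then σ p k (PowerSeries.coeff (R := K₀ p k) (i / p) f) else 0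

/-- `E(u)` regarded as a power series over `K₀`. -/
def ES (E : Polynomial (WittVector p k)) : PowerSeries (K₀ p k) :=
  ((E.map (ι p k) : Polynomial (K₀ p k)) : PowerSeries (K₀ p k))

/-- The ring `𝔖 = O_{K₀}[[u]] = W(k)[[u]]`. -/
abbrev SR : Type := PowerSeries (WittVector p k)

/-- `K₀[[u]]` is an algebra over `𝔖 = W(k)[[u]]`, coefficientwise. -/
noncomputable instance : Algebra (SR p k) (PowerSeries (K₀ p k)) :=
  (PowerSeries.map (ι p k)).toAlgebra

set_option linter.unusedSectionVars false
namespace Stmt11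
open PowerSeries

variable (p : ℕ) [hp : Fact p.Prime] (k : Type) [Field k] [CharP k p] [PerfectRing k p]

/-- The inclusion `𝔖 → K₀[[u]]`. -/
def ρ : SR p k →+* PowerSeries (K₀ p k) := PowerSeries.map (ι p k)

lemma ι_inj : Function.Injective (ι p k) := IsFractionRing.injective _ _

lemma ρ_inj : Function.Injective (ρ p k) := fun f g h => PowerSeries.ext fun n =>
  ι_inj p k (by simpa [ρ] using congrArg (PowerSeries.coeff n) h)

lemma algebraMap_eq : algebraMap (SR p k) (PowerSeries (K₀ p k)) = ρ p k := rfl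

/-- residue map W(k) → k -/
def res : WittVector p k →+* k := WittVector.constantCoeff

lemma res_apply (w : WittVector p k) : res p k w = w.coeff 0 := rfl

lemma res_frobenius (w : WittVector p k) :
    res p k (WittVector.frobenius w) = res p k w ^ p := by
  simpa [res_apply] using WittVector.coeff_frobenius_charP w 0

lemma res_p : res p k (p : WittVector p k) = 0 := by
  rw [map_natCast]; exact CharP.cast_eq_zero k p

lemma res_eq_zero_iff (w : WittVector p k) :
    res p k w = 0 ↔ ∃ c, w = (p : WittVector p k) * c := by
  constructor
  · intro h
    rcases eq_or_ne w 0 with rfl | hw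
    · exact ⟨0, by ring⟩
    obtain ⟨m, b, hb0, rfl⟩ := WittVector.exists_eq_pow_p_mul w hw
    rcases Nat.eq_zero_or_pos m with rfl | hm
    · simp only [pow_zero, one_mul] at h ⊢
      exact absurd h hb0
    · exact ⟨(p : WittVector p k) ^ (m - 1) * b, by
        rw [← mul_assoc, ← pow_succ']
        congr 2
        omega⟩
  · rintro ⟨c, rfl⟩
    rw [map_mul, res_p]; ring

lemma isUnit_of_res_ne_zero (w : WittVector p k) (h : res p k w ≠ 0) : IsUnit w :=
  WittVector.isUnit_of_coeff_zero_ne_zero w h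

lemma p_ne_zero_W : (p : WittVector p k) ≠ 0 := WittVector.p_nonzero p k

lemma natCast_ne_zero_W (n : ℕ) (hn : n ≠ 0) : (n : WittVector p k) ≠ 0 := by
  have h1 : n = p ^ (n.factorization p) * (n / p ^ (n.factorization p)) :=
    (Nat.ordProj_mul_ordCompl_eq_self n p).symm
  have h2 : ¬ p ∣ (n / p ^ (n.factorization p)) := Nat.not_dvd_ordCompl hp.out hn
  have h3 : ((n / p ^ (n.factorization p) : ℕ) : WittVector p k) ≠ 0 := by
    intro h
    have := congrArg (res p k) h
    rw [map_natCast, map_zero] at this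
    exact h2 ((CharP.cast_eq_zero_iff k p _).mp this)
  intro h
  rw [h1] at h
  push_cast at h
  rcases mul_eq_zero.mp h with h | h
  · exact pow_ne_zero _ (p_ne_zero_W p k) h
  · exact h3 h

lemma charZero_W : CharZero (WittVector p k) := by
  refine ⟨fun a b hab => ?_⟩
  rcases Nat.lt_trichotomy a b with h | h | h
  · exfalso
    have : ((b - a : ℕ) : WittVector p k) = 0 := by
      push_cast [Nat.cast_sub h.le] at *
      rw [← hab]; ring
    exact natCast_ne_zero_W p k _ (by omega) this
  · exact h
  · exfalso
    have : ((a - b : ℕ) : WittVector p k) = 0 := by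
      push_cast [Nat.cast_sub h.le] at *
      rw [hab]; ring
    exact natCast_ne_zero_W p k _ (by omega) this

lemma charZero_SR : CharZero (SR p k) := by
  have := charZero_W p k
  refine ⟨fun a b hab => Nat.cast_injective (R := WittVector p k) ?_⟩
  have h2 := congrArg (PowerSeries.constantCoeff (R := WittVector p k)) hab
  simpa using h2

end Stmt11
namespace Stmt11
open PowerSeries Finset

variable (p : ℕ) [hp : Fact p.Prime] (k : Type) [Field k] [CharP k p] [PerfectRing k p]

lemma σ_ι (w : WittVector p k) : σ p k (ι p k w) = ι p k (WittVector.frobenius w) := by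
  have : σ p k (ι p k w)
      = ((ι p k).comp (WittVector.frobeniusEquiv p k).toRingHom) w :=
    IsFractionRing.lift_algebraMap _ w
  simpa using this

/-- Frobenius on `𝔖` (bare function). -/
def φSfun (f : SR p k) : SR p k :=
  PowerSeries.mk fun i =>
    if p ∣ i then WittVector.frobenius (PowerSeries.coeff (i / p) f) else 0

lemma coeff_φSfun (f : SR p k) (i : ℕ) :
    PowerSeries.coeff i (φSfun p k f) =
      if p ∣ i then WittVector.frobenius (PowerSeries.coeff (i / p) f) else 0 :=
  coeff_mk _ _

lemma φSfun_one : φSfun p k 1 = 1 := by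
  refine PowerSeries.ext fun i => ?_
  rw [coeff_φSfun]
  split_ifs with h
  · rcases eq_or_ne i 0 with rfl | hi
    · simp
    · have hip : i / p ≠ 0 := by
        rcases h with ⟨c, rfl⟩
        rw [Nat.mul_div_cancel_left _ hp.out.pos]
        rintro rfl; simp at hi
      rw [PowerSeries.coeff_one, if_neg hip, map_zero, PowerSeries.coeff_one, if_neg hi]
  · have hi : i ≠ 0 := by rintro rfl; exact h ⟨0, rfl⟩
    rw [PowerSeries.coeff_one, if_neg hi]

lemma φSfun_mul (f g : SR p k) : φSfun p k (f * g) = φSfun p k f * φSfun p k g := by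
  have hp0 : 0 < p := hp.out.pos
  refine PowerSeries.ext fun n => ?_
  rw [coeff_φSfun]
  have hterm : ∀ x ∈ Finset.HasAntidiagonal.antidiagonal n, ¬(p ∣ x.1 ∧ p ∣ x.2) →
      (PowerSeries.coeff x.1 (φSfun p k f)) * (PowerSeries.coeff x.2 (φSfun p k g)) = 0 := by
    intro x _ hx
    rw [coeff_φSfun, coeff_φSfun]
    rcases Decidable.not_and_iff_or_not.mp hx with h | h
    · rw [if_neg h, zero_mul]
    · rw [if_neg h, mul_zero]
  by_cases hn : p ∣ n
  · rw [if_pos hn]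
    have h1 : (PowerSeries.coeff n) (φSfun p k f * φSfun p k g)
        = ∑ x ∈ (Finset.HasAntidiagonal.antidiagonal n).filter (fun x => p ∣ x.1 ∧ p ∣ x.2),
            (PowerSeries.coeff x.1 (φSfun p k f)) * (PowerSeries.coeff x.2 (φSfun p k g)) := by
      rw [PowerSeries.coeff_mul]
      exact (Finset.sum_filter_of_ne (fun x hx h => by_contra fun hc => h (hterm x hx hc))).symm
    rw [h1, PowerSeries.coeff_mul, map_sum]
    refine Finset.sum_bij' (fun y (_ : y ∈ Finset.HasAntidiagonal.antidiagonal (n / p)) => ((p * y.1, p * y.2) : ℕ × ℕ))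
      (fun x _ => ((x.1 / p, x.2 / p) : ℕ × ℕ)) ?_ ?_ ?_ ?_ ?_
    · intro y hy
      rw [Finset.mem_filter, Finset.HasAntidiagonal.mem_antidiagonal]
      rw [Finset.HasAntidiagonal.mem_antidiagonal] at hy
      exact ⟨by rw [← Nat.mul_add, hy, Nat.mul_div_cancel' hn], ⟨_, rfl⟩, ⟨_, rfl⟩⟩
    · rintro ⟨x1, x2⟩ hx
      rw [Finset.mem_filter, Finset.HasAntidiagonal.mem_antidiagonal] at hx
      obtain ⟨hsum, ⟨a, ha⟩, ⟨b, hb⟩⟩ := hx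
      rw [Finset.HasAntidiagonal.mem_antidiagonal]
      simp only at ha hb hsum ⊢
      subst ha hb
      rw [Nat.mul_div_cancel_left _ hp0, Nat.mul_div_cancel_left _ hp0]
      have : p * (a + b) = p * (n / p) := by rw [Nat.mul_add, hsum, Nat.mul_div_cancel' hn]
      exact Nat.eq_of_mul_eq_mul_left hp0 this
    · intro y _
      simp [Nat.mul_div_cancel_left _ hp0]
    · rintro ⟨x1, x2⟩ hx
      rw [Finset.mem_filter] at hx
      obtain ⟨-, ⟨a, ha⟩, ⟨b, hb⟩⟩ := hx
      simp only at ha hb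
      subst ha hb
      simp [Nat.mul_div_cancel_left _ hp0]
    · intro y _
      rw [map_mul, coeff_φSfun, coeff_φSfun,
        if_pos ⟨y.1, rfl⟩, if_pos ⟨y.2, rfl⟩,
        Nat.mul_div_cancel_left _ hp0, Nat.mul_div_cancel_left _ hp0]
  · rw [if_neg hn, PowerSeries.coeff_mul]
    exact (Finset.sum_eq_zero fun x hx => hterm x hx (fun ⟨h1, h2⟩ => by
      rw [Finset.HasAntidiagonal.mem_antidiagonal] at hx
      exact hn (hx ▸ Nat.dvd_add h1 h2))).symm

/-- Frobenius on `𝔖`. -/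
def φS : SR p k →+* SR p k where
  toFun := φSfun p k
  map_one' := φSfun_one p k
  map_mul' := φSfun_mul p k
  map_zero' := by
    refine PowerSeries.ext fun i => ?_
    rw [coeff_φSfun]
    split_ifs <;> simp
  map_add' := by
    intro f g
    show φSfun p k (f + g) = φSfun p k f + φSfun p k g
    refine PowerSeries.ext fun i => ?_
    rw [map_add, coeff_φSfun, coeff_φSfun, coeff_φSfun, map_add]
    split_ifs <;> simp

lemma coeff_φS (f : SR p k) (i : ℕ) :
    PowerSeries.coeff i (φS p k f) =
      if p ∣ i then WittVector.frobenius (PowerSeries.coeff (i / p) f) else 0 :=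
  coeff_φSfun p k f i

lemma φS_p : φS p k (p : SR p k) = (p : SR p k) := map_natCast _ p

/-- compatibility of the two Frobenii through ρ -/
lemma φps_ρ (f : SR p k) : φps p k (ρ p k f) = ρ p k (φS p k f) := by
  refine PowerSeries.ext fun i => ?_
  rw [φps, coeff_mk]
  conv_rhs => rw [ρ, PowerSeries.coeff_map, coeff_φS]
  split_ifs with h
  · rw [ρ, PowerSeries.coeff_map, σ_ι]
  · rw [map_zero]

/-- reduction mod p : 𝔖 → k[[u]] -/
def π : SR p k →+* PowerSeries k := PowerSeries.map (res p k)

lemma coeff_π (f : SR p k) (i : ℕ) :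
    PowerSeries.coeff i (π p k f) = res p k (PowerSeries.coeff i f) := by
  rw [π, PowerSeries.coeff_map]

lemma π_p : π p k (p : SR p k) = 0 := by
  have : ((p : SR p k)) = PowerSeries.C (p : WittVector p k) := (map_natCast (C (R := WittVector p k)) p).symm
  rw [π, this, PowerSeries.map_C, res_p]
  simp

lemma π_eq_zero_iff (f : SR p k) : π p k f = 0 ↔ ∃ g, f = (p : SR p k) * g := by
  constructor
  · intro h
    have hc : ∀ i, ∃ c, PowerSeries.coeff i f = (p : WittVector p k) * c := by
      intro i
      rw [← res_eq_zero_iff, ← coeff_π, h, map_zero]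
    choose c hcspec using hc
    refine ⟨PowerSeries.mk c, ?_⟩
    refine PowerSeries.ext fun i => ?_
    rw [show ((p : SR p k)) = PowerSeries.C (p : WittVector p k) from (map_natCast (C (R := WittVector p k)) p).symm,
      PowerSeries.coeff_C_mul, coeff_mk]
    exact hcspec i
  · rintro ⟨g, rfl⟩
    rw [map_mul, π_p, zero_mul]

lemma π_φS_ne_zero (f : SR p k) (hf : π p k f ≠ 0) : π p k (φS p k f) ≠ 0 := by
  have : ∃ j, PowerSeries.coeff j (π p k f) ≠ 0 := by
    by_contra hco
    push_neg at hco
    exact hf (PowerSeries.ext hco)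
  obtain ⟨j, hj⟩ := this
  intro h0
  have := congrArg (PowerSeries.coeff (p * j)) h0
  rw [coeff_π, coeff_φS, if_pos ⟨j, rfl⟩, Nat.mul_div_cancel_left _ hp.out.pos,
    res_frobenius, map_zero, ← coeff_π] at this
  exact hj (pow_eq_zero_iff hp.out.ne_zero |>.mp this)

lemma W_bound (w : WittVector p k) (hw : w ≠ 0) :
    ∃ m : ℕ, ¬ ((p : WittVector p k) ^ (m + 1) ∣ w) := by
  obtain ⟨m, b, hb0, rfl⟩ := WittVector.exists_eq_pow_p_mul w hw
  refine ⟨m, fun hdvd => ?_⟩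
  obtain ⟨c, hc⟩ := hdvd
  have hpm : ((p : WittVector p k) ^ m) ≠ 0 := pow_ne_zero _ (p_ne_zero_W p k)
  have hb : b = (p : WittVector p k) * c := by
    apply mul_left_cancel₀ hpm
    rw [hc]; ring
  apply hb0
  have h2 := congrArg (res p k) hb
  rw [map_mul, res_p, zero_mul] at h2
  exact h2

lemma exists_p_pow (x : SR p k) (hx : x ≠ 0) :
    ∃ (α : ℕ) (y : SR p k), x = (p : SR p k) ^ α * y ∧ π p k y ≠ 0 := by
  have : ∃ i, PowerSeries.coeff i x ≠ 0 := by
    by_contra hco; push_neg at hco; exact hx (PowerSeries.ext (by simpa using hco))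
  obtain ⟨i, hi⟩ := this
  obtain ⟨m, hm⟩ := W_bound p k _ hi
  have hdvd : ∀ n : ℕ, ((p : SR p k) ^ n ∣ x) → ((p : WittVector p k) ^ n ∣ PowerSeries.coeff i x) := by
    rintro n ⟨y, rfl⟩
    refine ⟨PowerSeries.coeff i y, ?_⟩
    rw [show ((p : SR p k) ^ n) = PowerSeries.C ((p : WittVector p k) ^ n) by rw [map_pow, map_natCast],
      PowerSeries.coeff_C_mul]
  set P : ℕ → Prop := fun n => (p : SR p k) ^ n ∣ x with hP
  have hPdec : DecidablePred P := fun n => Classical.propDecidable _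
  have hbound : ∀ n, P n → n ≤ m := by
    intro n hn
    by_contra hgt
    exact hm (dvd_trans (pow_dvd_pow _ (by omega)) (hdvd n hn))
  set α := Nat.findGreatest P m with hα
  have hPα : P α := Nat.findGreatest_spec (m := 0) (n := m) (Nat.zero_le m) (by simp [hP])
  have hnot : ¬ P (α + 1) := by
    intro hPs
    have h1 : α + 1 ≤ m := hbound _ hPs
    exact Nat.findGreatest_is_greatest (lt_add_one α) h1 hPs
  obtain ⟨y, hy⟩ := hPα
  refine ⟨α, y, hy, fun h0 => ?_⟩
  obtain ⟨g, rfl⟩ := (π_eq_zero_iff p k y).mp h0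
  exact hnot ⟨g, by rw [hy]; ring⟩

lemma π_coe_monic_ne_zero (E : Polynomial (WittVector p k)) (hE : E.Monic) :
    π p k (E : SR p k) ≠ 0 := by
  intro h
  have := congrArg (PowerSeries.coeff E.natDegree) h
  rw [coeff_π, Polynomial.coeff_coe, hE.coeff_natDegree, map_one, map_zero] at this
  exact one_ne_zero this

end Stmt11
namespace Stmt11
open PowerSeries Finset

variable (p : ℕ) [hp : Fact p.Prime] (k : Type) [Field k] [CharP k p] [PerfectRing k p]

lemma valGE0_iff (a : K₀ p k) : valGE p k (-((0:ℝ) * (0:ℕ))) a ↔ ∃ w, a = ι p k w := by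
  have h : (-((0:ℝ) * (0:ℕ))) = 0 := by norm_num
  rw [h]
  unfold valGE
  norm_num

lemma valGE0_iff' (i : ℕ) (a : K₀ p k) : valGE p k (-((0:ℝ) * (i:ℕ))) a ↔ ∃ w, a = ι p k w := by
  have h : (-((0:ℝ) * (i:ℕ))) = -((0:ℝ) * (0:ℕ)) := by norm_num
  rw [h, valGE0_iff]

lemma memS0_iff (f : PowerSeries (K₀ p k)) :
    memS p k 0 f ↔ ∃ g : SR p k, f = ρ p k g := by
  constructor
  · intro h
    have h' : ∀ i, ∃ w, PowerSeries.coeff i f = ι p k w := by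
      intro i
      exact (valGE0_iff' p k i _).mp (h i)
    choose w hw using h'
    refine ⟨PowerSeries.mk w, PowerSeries.ext fun i => ?_⟩
    rw [ρ, PowerSeries.coeff_map, coeff_mk]
    exact hw i
  · rintro ⟨g, rfl⟩
    intro i
    rw [valGE0_iff']
    exact ⟨PowerSeries.coeff i g, by rw [ρ, PowerSeries.coeff_map]⟩

lemma memE_iff (f : PowerSeries (K₀ p k)) :
    memE p k 0 f ↔ ∃ (n : ℕ) (g : SR p k), (p : PowerSeries (K₀ p k)) ^ n * f = ρ p k g := by
  unfold memE
  have hC : ∀ n : ℕ, PowerSeries.C (R := K₀ p k) ((p : K₀ p k) ^ n) = (p : PowerSeries (K₀ p k)) ^ n := by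
    intro n; rw [map_pow, map_natCast]
  constructor
  · rintro ⟨n, hn⟩
    rw [hC] at hn
    obtain ⟨g, hg⟩ := (memS0_iff p k _).mp hn
    exact ⟨n, g, hg⟩
  · rintro ⟨n, g, hg⟩
    exact ⟨n, by rw [hC]; exact (memS0_iff p k _).mpr ⟨g, hg⟩⟩

lemma memE_rho (g : SR p k) : memE p k 0 (ρ p k g) :=
  (memE_iff p k _).mpr ⟨0, g, by rw [pow_zero, one_mul]⟩

lemma memE_zero : memE p k 0 0 := by
  simpa using memE_rho p k 0

lemma memE_add {f g : PowerSeries (K₀ p k)} (hf : memE p k 0 f) (hg : memE p k 0 g) :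
    memE p k 0 (f + g) := by
  rw [memE_iff] at *
  obtain ⟨n1, g1, h1⟩ := hf
  obtain ⟨n2, g2, h2⟩ := hg
  refine ⟨n1 + n2, (p : SR p k) ^ n2 * g1 + (p : SR p k) ^ n1 * g2, ?_⟩
  rw [map_add, map_mul, map_mul, ← h1, ← h2, map_pow, map_natCast, map_pow, map_natCast]
  push_cast
  ring

lemma memE_rho_mul {f : PowerSeries (K₀ p k)} (s : SR p k) (hf : memE p k 0 f) :
    memE p k 0 (ρ p k s * f) := by
  rw [memE_iff] at *
  obtain ⟨n, g, h⟩ := hf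
  refine ⟨n, s * g, ?_⟩
  rw [map_mul, ← h]
  ring

/-- coordinatewise membership in ℰ⁺ -/
def vecE {d : ℕ} (x : Fin d → PowerSeries (K₀ p k)) : Prop := ∀ j, memE p k 0 (x j)

lemma smul_eq_rho_mul {d : ℕ} (s : SR p k) (x : Fin d → PowerSeries (K₀ p k)) (j : Fin d) :
    (s • x) j = ρ p k s * x j := by
  rw [Pi.smul_apply]
  exact Algebra.smul_def s (x j)

lemma smul_eq_rho_smul {d : ℕ} (s : SR p k) (x : Fin d → PowerSeries (K₀ p k)) :
    s • x = (ρ p k s) • x := by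
  funext j
  rw [smul_eq_rho_mul, Pi.smul_apply, smul_eq_mul]

lemma vecE_zero {d : ℕ} : vecE p k (0 : Fin d → PowerSeries (K₀ p k)) :=
  fun _ => memE_zero p k

lemma vecE_add {d : ℕ} {x y : Fin d → PowerSeries (K₀ p k)} (hx : vecE p k x) (hy : vecE p k y) :
    vecE p k (x + y) := fun j => memE_add p k (hx j) (hy j)

lemma vecE_smul {d : ℕ} (s : SR p k) {x : Fin d → PowerSeries (K₀ p k)} (hx : vecE p k x) :
    vecE p k (s • x) := fun j => by
  rw [smul_eq_rho_mul]
  exact memE_rho_mul p k s (hx j)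

lemma vecE_sum {d m : ℕ} (v : Fin m → (Fin d → PowerSeries (K₀ p k)))
    (hv : ∀ i, vecE p k (v i)) (c : Fin m → SR p k) (s : Finset (Fin m)) :
    vecE p k (∑ i ∈ s, c i • v i) := by
  classical
  induction s using Finset.induction_on with
  | empty => simpa using vecE_zero p k
  | insert _ _ hnotmem ih =>
      rw [Finset.sum_insert hnotmem]
      exact vecE_add p k (vecE_smul p k _ (hv _)) ih

end Stmt11
namespace Stmt11
open PowerSeries Finset

variable (p : ℕ) [hp : Fact p.Prime] (k : Type) [Field k] [CharP k p] [PerfectRing k p]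

section Phi

variable {d : ℕ} (Φ : (Fin d → PowerSeries (K₀ p k)) → (Fin d → PowerSeries (K₀ p k)))
  (hΦadd : ∀ x y, vecE p k x → vecE p k y → Φ (x + y) = Φ x + Φ y)
  (hΦsemi : ∀ (s : PowerSeries (K₀ p k)) x, memE p k 0 s → vecE p k x →
      Φ (s • x) = φps p k s • Φ x)

include hΦadd in
lemma Φ_zero : Φ 0 = 0 := by
  have h := hΦadd 0 0 (vecE_zero p k) (vecE_zero p k)
  rw [add_zero] at h
  exact (left_eq_add.mp h)

include hΦsemi in
lemma Φ_smulR (s : SR p k) (x : Fin d → PowerSeries (K₀ p k)) (hx : vecE p k x) :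
    Φ (s • x) = φS p k s • Φ x := by
  rw [smul_eq_rho_smul, hΦsemi (ρ p k s) x (memE_rho p k s) hx, φps_ρ, ← smul_eq_rho_smul]

include hΦadd hΦsemi in
lemma Φ_sum {m : ℕ} (c : Fin m → SR p k) (v : Fin m → (Fin d → PowerSeries (K₀ p k)))
    (hv : ∀ i, vecE p k (v i)) (s : Finset (Fin m)) :
    Φ (∑ i ∈ s, c i • v i) = ∑ i ∈ s, φS p k (c i) • Φ (v i) := by
  classical
  induction s using Finset.induction_on with
  | empty => simpa using Φ_zero p k Φ hΦadd
  | @insert a s hnotmem ih =>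
      rw [Finset.sum_insert hnotmem, Finset.sum_insert hnotmem,
        hΦadd _ _ (vecE_smul p k _ (hv a)) (vecE_sum p k v hv c s),
        Φ_smulR p k Φ hΦsemi _ _ (hv a), ih]

end Phi

section Reps

variable {d : ℕ} (M : Submodule (SR p k) (Fin d → PowerSeries (K₀ p k)))

lemma coe_sum_repr {m : ℕ} (bb : Module.Basis (Fin m) (SR p k) M)
    (x : Fin d → PowerSeries (K₀ p k)) (hx : x ∈ M) :
    x = ∑ i, (bb.repr ⟨x, hx⟩ i) • ((bb i : Fin d → PowerSeries (K₀ p k))) := by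
  have h := bb.sum_repr ⟨x, hx⟩
  have h2 := congrArg (M.subtype) h
  rw [map_sum] at h2
  simp only [Submodule.coe_subtype, map_smul] at h2
  exact h2.symm

lemma linind_basis {m : ℕ} (bb : Module.Basis (Fin m) (SR p k) M) :
    LinearIndependent (SR p k) (fun i => ((bb i : Fin d → PowerSeries (K₀ p k)))) := by
  have := bb.linearIndependent
  have h2 := this.map' M.subtype (Submodule.ker_subtype M)
  exact h2

lemma matrix_ext {m : ℕ} (bb : Module.Basis (Fin m) (SR p k) M)
    (X Y : Matrix (Fin m) (Fin m) (SR p k))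
    (h : ∀ i, ∑ l, X l i • ((bb l : Fin d → PowerSeries (K₀ p k)))
        = ∑ l, Y l i • ((bb l : Fin d → PowerSeries (K₀ p k)))) :
    X = Y := by
  have hli := linind_basis p k M bb
  apply Matrix.ext
  intro l i
  have h0 : ∑ j, (X j i - Y j i) • ((bb j : Fin d → PowerSeries (K₀ p k))) = 0 := by
    simp only [sub_smul, Finset.sum_sub_distrib]
    rw [h i, sub_self]
  have := (Fintype.linearIndependent_iff.mp hli) _ h0
  have hz := this l
  exact sub_eq_zero.mp hz

variable {dd : ℕ} (Φ : (Fin d → PowerSeries (K₀ p k)) → (Fin d → PowerSeries (K₀ p k)))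

lemma span_phi_eq
    (hΦadd : ∀ x y, vecE p k x → vecE p k y → Φ (x + y) = Φ x + Φ y)
    (hΦsemi : ∀ (s : PowerSeries (K₀ p k)) x, memE p k 0 s → vecE p k x →
      Φ (s • x) = φps p k s • Φ x)
    (hME : ∀ x ∈ M, vecE p k x)
    {m : ℕ} (bb : Module.Basis (Fin m) (SR p k) M) :
    Submodule.span (SR p k) (Φ '' (M : Set _)) =
      Submodule.span (SR p k)
        (Set.range fun i => Φ ((bb i : Fin d → PowerSeries (K₀ p k)))) := by
  apply le_antisymm
  · rw [Submodule.span_le]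
    rintro _ ⟨x, hxM, rfl⟩
    have hrep := coe_sum_repr p k M bb x hxM
    have hsum : Φ x = ∑ i, φS p k (bb.repr ⟨x, hxM⟩ i) • Φ ((bb i : Fin d → PowerSeries (K₀ p k))) := by
      conv_lhs => rw [hrep]
      exact Φ_sum p k Φ hΦadd hΦsemi _ _ (fun i => hME _ (bb i).2) _
    rw [hsum]
    exact Submodule.sum_mem _ fun i _ =>
      Submodule.smul_mem _ _ (Submodule.subset_span (Set.mem_range_self i))
  · rw [Submodule.span_le]
    rintro _ ⟨i, rfl⟩
    exact Submodule.subset_span ⟨_, (bb i).2, rfl⟩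

end Reps

end Stmt11
namespace Stmt11
open PowerSeries Finset

variable (p : ℕ) [hp : Fact p.Prime] (k : Type) [Field k] [CharP k p] [PerfectRing k p]

lemma pR_ne_zero : (p : SR p k) ≠ 0 := by
  intro h
  have := congrArg (PowerSeries.constantCoeff (R := WittVector p k)) h
  rw [map_natCast, map_zero] at this
  exact p_ne_zero_W p k this

lemma uniform_pow {d : ℕ} (M : Submodule (SR p k) (Fin d → PowerSeries (K₀ p k)))
    (hMspan : ∀ y, vecE p k y → ∃ n : ℕ, ((p : SR p k) ^ n) • y ∈ M)
    {m : ℕ} (v : Fin m → (Fin d → PowerSeries (K₀ p k))) (hv : ∀ i, vecE p k (v i)) :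
    ∃ n : ℕ, ∀ i, ((p : SR p k) ^ n) • v i ∈ M := by
  choose nf hnf using fun i => hMspan (v i) (hv i)
  refine ⟨Finset.univ.sup nf, fun i => ?_⟩
  have hle : nf i ≤ Finset.univ.sup nf := Finset.le_sup (Finset.mem_univ i)
  have h2 : (p : SR p k) ^ (Finset.univ.sup nf) • v i
      = (p : SR p k) ^ (Finset.univ.sup nf - nf i) • ((p : SR p k) ^ (nf i) • v i) := by
    rw [smul_smul, ← pow_add]
    congr 2
    exact (Nat.sub_add_cancel hle).symm
  rw [h2]
  exact M.smul_mem _ (hnf i)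

lemma sum_mul_smul {V : Type} [AddCommMonoid V] [Module (SR p k) V] {a bn c : ℕ}
    (X : Matrix (Fin a) (Fin bn) (SR p k)) (Y : Matrix (Fin bn) (Fin c) (SR p k))
    (w : Fin a → V) (i : Fin c) :
    ∑ l, (X * Y) l i • w l = ∑ j, Y j i • ∑ l, X l j • w l := by
  simp only [Matrix.mul_apply, Finset.sum_smul, Finset.smul_sum]
  rw [Finset.sum_comm]
  refine Finset.sum_congr rfl fun j _ => Finset.sum_congr rfl fun l _ => ?_
  rw [mul_comm, mul_smul]

lemma sum_scalar_smul {V : Type} [AddCommMonoid V] [Module (SR p k) V] {m : ℕ}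
    (cc : SR p k) (w : Fin m → V) (i : Fin m) :
    ∑ l, (cc • (1 : Matrix (Fin m) (Fin m) (SR p k))) l i • w l = cc • w i := by
  rw [Finset.sum_eq_single i]
  · rw [Matrix.smul_apply, Matrix.one_apply_eq, smul_eq_mul, mul_one]
  · intro l _ hl
    rw [Matrix.smul_apply, Matrix.one_apply_ne hl, smul_eq_mul, mul_zero, zero_smul]
  · intro h; exact absurd (Finset.mem_univ i) h

lemma matrix_smul_cancel {m1 m2 : ℕ} (c : SR p k) (hc : c ≠ 0)
    (X Y : Matrix (Fin m1) (Fin m2) (SR p k)) (h : c • X = c • Y) : X = Y := by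
  apply Matrix.ext; intro i j
  have h2 : c * X i j = c * Y i j := by
    have h3 := congrArg (fun Z => Z i j) h
    simpa [Matrix.smul_apply] using h3
  exact mul_left_cancel₀ hc h2

lemma card_eq {d : ℕ}
    (M M' : Submodule (SR p k) (Fin d → PowerSeries (K₀ p k)))
    (hME : ∀ x ∈ M, vecE p k x) (hM'E : ∀ x ∈ M', vecE p k x)
    (hMspan : ∀ y, vecE p k y → ∃ n : ℕ, ((p : SR p k) ^ n) • y ∈ M)
    (hM'span : ∀ y, vecE p k y → ∃ n : ℕ, ((p : SR p k) ^ n) • y ∈ M')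
    {d1 d2 : ℕ} (b1 : Module.Basis (Fin d1) (SR p k) M) (b2 : Module.Basis (Fin d2) (SR p k) M') :
    d1 = d2 := by
  classical
  set eV : Fin d1 → (Fin d → PowerSeries (K₀ p k)) := fun i => (b1 i : _) with heV
  set fV : Fin d2 → (Fin d → PowerSeries (K₀ p k)) := fun i => (b2 i : _) with hfV
  have heE : ∀ i, vecE p k (eV i) := fun i => hME _ (b1 i).2
  have hfE : ∀ i, vecE p k (fV i) := fun i => hM'E _ (b2 i).2
  obtain ⟨n, hn⟩ := uniform_pow p k M hMspan fV hfE
  obtain ⟨m, hm⟩ := uniform_pow p k M' hM'span eV heE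
  set A : Matrix (Fin d1) (Fin d2) (SR p k) := fun j i => b1.repr ⟨_, hn i⟩ j with hAdef
  have hA : ∀ i, ((p : SR p k) ^ n) • fV i = ∑ j, A j i • eV j :=
    fun i => coe_sum_repr p k M b1 _ (hn i)
  set B : Matrix (Fin d2) (Fin d1) (SR p k) := fun j i => b2.repr ⟨_, hm i⟩ j with hBdef
  have hB : ∀ i, ((p : SR p k) ^ m) • eV i = ∑ j, B j i • fV j :=
    fun i => coe_sum_repr p k M' b2 _ (hm i)
  have I2 : A * B = ((p : SR p k) ^ (n + m)) • 1 := by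
    apply matrix_ext p k M b1
    intro i
    rw [sum_mul_smul, sum_scalar_smul]
    calc ∑ j, B j i • ∑ l, A l j • eV l
        = ∑ j, B j i • (((p : SR p k) ^ n) • fV j) := by
          refine Finset.sum_congr rfl fun j _ => ?_; rw [← hA j]
      _ = ((p : SR p k) ^ n) • ∑ j, B j i • fV j := by
          rw [Finset.smul_sum]
          exact Finset.sum_congr rfl fun j _ => (smul_comm _ _ _).symm
      _ = ((p : SR p k) ^ n) • (((p : SR p k) ^ m) • eV i) := by rw [← hB i]
      _ = ((p : SR p k) ^ (n + m)) • eV i := by rw [smul_smul, ← pow_add]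
  have I3 : B * A = ((p : SR p k) ^ (n + m)) • 1 := by
    apply matrix_ext p k M' b2
    intro i
    rw [sum_mul_smul, sum_scalar_smul]
    calc ∑ j, A j i • ∑ l, B l j • fV l
        = ∑ j, A j i • (((p : SR p k) ^ m) • eV j) := by
          refine Finset.sum_congr rfl fun j _ => ?_; rw [← hB j]
      _ = ((p : SR p k) ^ m) • ∑ j, A j i • eV j := by
          rw [Finset.smul_sum]
          exact Finset.sum_congr rfl fun j _ => (smul_comm _ _ _).symm
      _ = ((p : SR p k) ^ m) • (((p : SR p k) ^ n) • fV i) := by rw [← hA i]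
      _ = ((p : SR p k) ^ (n + m)) • fV i := by rw [smul_smul, ← pow_add, Nat.add_comm m n]
  have ht := Matrix.trace_mul_comm A B
  rw [I2, I3] at ht
  rw [Matrix.trace_smul, Matrix.trace_smul, Matrix.trace_one, Matrix.trace_one] at ht
  have hpp : ((p : SR p k) ^ (n + m)) ≠ 0 := pow_ne_zero _ (pR_ne_zero p k)
  have hc := charZero_SR p k
  have hcast : ((d1 : ℕ) : SR p k) = ((d2 : ℕ) : SR p k) := by
    have h1 : ((p : SR p k) ^ (n + m)) * (d1 : SR p k)
        = ((p : SR p k) ^ (n + m)) * (d2 : SR p k) := by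
      simpa [smul_eq_mul, Fintype.card_fin] using ht
    exact mul_left_cancel₀ hpp h1
  exact_mod_cast hcast

lemma descend {dm : ℕ} (C' : Matrix (Fin dm) (Fin dm) (SR p k))
    (hdet : π p k C'.det ≠ 0) :
    ∀ (t : ℕ) (z : SR p k) (X : Matrix (Fin dm) (Fin dm) (SR p k)),
      C' * X = ((p : SR p k) ^ t * z) • 1 → ∃ Y, C' * Y = z • 1 := by
  intro t
  induction t with
  | zero =>
      intro z X h
      exact ⟨X, by rwa [pow_zero, one_mul] at h⟩
  | succ t ih =>
      intro z X h
      have hπ : (π p k).mapMatrix C' * (π p k).mapMatrix X = 0 := by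
        rw [← map_mul, h]
        apply Matrix.ext; intro i j
        rw [RingHom.mapMatrix_apply, Matrix.map_apply, Matrix.smul_apply, Matrix.zero_apply,
          smul_eq_mul, map_mul, map_mul, map_pow, π_p]
        rw [zero_pow (Nat.succ_ne_zero t)]
        ring
      have hdet' : ((π p k).mapMatrix C').det ≠ 0 := by
        rwa [← RingHom.map_det]
      have hX0 : (π p k).mapMatrix X = 0 := by
        have h2 := congrArg (fun Z => ((π p k).mapMatrix C').adjugate * Z) hπ
        simp only [Matrix.mul_zero] at h2
        rw [← Matrix.mul_assoc, Matrix.adjugate_mul] at h2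
        apply Matrix.ext; intro i j
        rw [Matrix.smul_mul, Matrix.one_mul] at h2
        have h3 := congrArg (fun Z => Z i j) h2
        simp only [Matrix.smul_apply, Matrix.zero_apply, smul_eq_mul] at h3
        exact (mul_eq_zero.mp h3).resolve_left hdet'
      have hdiv : ∀ i j, ∃ y, X i j = (p : SR p k) * y := by
        intro i j
        apply (π_eq_zero_iff p k _).mp
        have h4 := congrArg (fun Z => Z i j) hX0
        simpa [RingHom.mapMatrix_apply, Matrix.map_apply] using h4
      choose Y hY using fun i j => hdiv i j
      have hXY : X = (p : SR p k) • (Matrix.of Y) := by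
        apply Matrix.ext; intro i j
        rw [Matrix.smul_apply, Matrix.of_apply, smul_eq_mul]
        exact hY i j
      rw [hXY, Matrix.mul_smul] at h
      have hz : (p : SR p k) • (C' * Matrix.of Y)
          = (p : SR p k) • (((p : SR p k) ^ t * z) • 1) := by
        rw [h, smul_smul]
        congr 1
        rw [pow_succ]
        ring
      exact ih z (Matrix.of Y) (matrix_smul_cancel p k _ (pR_ne_zero p k) _ _ hz)

end Stmt11
set_option maxHeartbeats 1000000 in
open Stmt11 in
theorem stmt11 (p : ℕ) [Fact p.Prime] (k : Type) [Field k] [CharP k p] [PerfectRing k p]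
    (e : ℕ) (he : 1 ≤ e) (E : Polynomial (WittVector p k))
    (hE_monic : E.Monic) (hE_deg : E.natDegree = e)
    (hE_coeff : ∀ j < e, ∃ c, E.coeff j = p * c)
    (hE_zero : ¬ ∃ c, E.coeff 0 = (p : WittVector p k) ^ 2 * c)
    (r d : ℕ) (hr : 1 ≤ r) (hd : 1 ≤ d)
    (Φ : (Fin d → PowerSeries (K₀ p k)) → (Fin d → PowerSeries (K₀ p k)))
    (hΦE : ∀ x, (∀ j, memE p k 0 (x j)) → ∀ j, memE p k 0 (Φ x j))
    (hΦadd : ∀ x y, (∀ j, memE p k 0 (x j)) → (∀ j, memE p k 0 (y j)) →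
      Φ (x + y) = Φ x + Φ y)
    (hΦsemi : ∀ (s : PowerSeries (K₀ p k)) x, memE p k 0 s → (∀ j, memE p k 0 (x j)) →
      Φ (s • x) = φps p k s • Φ x)
    (M : Submodule (SR p k) (Fin d → PowerSeries (K₀ p k)))
    (hME : ∀ x ∈ M, ∀ j, memE p k 0 (x j))
    (hMfree : Nonempty (Module.Basis (Fin d) (SR p k) M))
    (hMstable : ∀ x ∈ M, Φ x ∈ M)
    (hMspan : ∀ y : Fin d → PowerSeries (K₀ p k), (∀ j, memE p k 0 (y j)) →
      ∃ n : ℕ, ((p : SR p k) ^ n) • y ∈ M)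
    (hMheight : ∀ x ∈ M, ((E : SR p k) ^ r) • x ∈ Submodule.span (SR p k) (Φ '' (M : Set _)))
    (M' : Submodule (SR p k) (Fin d → PowerSeries (K₀ p k)))
    (hM'E : ∀ x ∈ M', ∀ j, memE p k 0 (x j))
    (hM'free : Module.Free (SR p k) M') (hM'fin : Module.Finite (SR p k) M')
    (hM'stable : ∀ x ∈ M', Φ x ∈ M')
    (hM'span : ∀ y : Fin d → PowerSeries (K₀ p k), (∀ j, memE p k 0 (y j)) →
      ∃ n : ℕ, ((p : SR p k) ^ n) • y ∈ M') :
    ∀ x ∈ M', ((E : SR p k) ^ r) • x ∈ Submodule.span (SR p k) (Φ '' (M' : Set _)) := by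
  classical
  intro x hx
  obtain ⟨b⟩ := hMfree
  -- a basis for M', indexed by `Fin d'`
  let ib := Module.Free.chooseBasis (SR p k) ↥M'
  let d' := Fintype.card (Module.Free.ChooseBasisIndex (SR p k) ↥M')
  let b'' : Module.Basis (Fin d') (SR p k) ↥M' := ib.reindex (Fintype.equivFin _)
  have hdd : d = d' := card_eq p k M M' hME hM'E hMspan hM'span b b''
  let b' : Module.Basis (Fin d) (SR p k) ↥M' := b''.reindex (finCongr hdd.symm)
  set eV : Fin d → (Fin d → PowerSeries (K₀ p k)) := fun i => (b i : _) with heV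
  set fV : Fin d → (Fin d → PowerSeries (K₀ p k)) := fun i => (b' i : _) with hfV
  have heE : ∀ i, vecE p k (eV i) := fun i => hME _ (b i).2
  have hfE : ∀ i, vecE p k (fV i) := fun i => hM'E _ (b' i).2
  obtain ⟨n, hn⟩ := uniform_pow p k M hMspan fV hfE
  obtain ⟨m, hm⟩ := uniform_pow p k M' hM'span eV heE
  set N := n + m with hN
  have hpnz : (p : SR p k) ≠ 0 := pR_ne_zero p k
  -- the matrices
  set A : Matrix (Fin d) (Fin d) (SR p k) := fun j i => b.repr ⟨_, hn i⟩ j with hAdef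
  have hA : ∀ i, ((p : SR p k) ^ n) • fV i = ∑ j, A j i • eV j :=
    fun i => coe_sum_repr p k M b _ (hn i)
  set B : Matrix (Fin d) (Fin d) (SR p k) := fun j i => b'.repr ⟨_, hm i⟩ j with hBdef
  have hB : ∀ i, ((p : SR p k) ^ m) • eV i = ∑ j, B j i • fV j :=
    fun i => coe_sum_repr p k M' b' _ (hm i)
  set C : Matrix (Fin d) (Fin d) (SR p k) :=
    fun j i => b.repr ⟨Φ (eV i), hMstable _ (b i).2⟩ j with hCdef
  have hC : ∀ i, Φ (eV i) = ∑ j, C j i • eV j :=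
    fun i => coe_sum_repr p k M b _ (hMstable _ (b i).2)
  set C' : Matrix (Fin d) (Fin d) (SR p k) :=
    fun j i => b'.repr ⟨Φ (fV i), hM'stable _ (b' i).2⟩ j with hC'def
  have hC' : ∀ i, Φ (fV i) = ∑ j, C' j i • fV j :=
    fun i => coe_sum_repr p k M' b' _ (hM'stable _ (b' i).2)
  -- height coefficients for M
  have hGmem : ∀ i, ((E : SR p k) ^ r) • eV i
      ∈ Submodule.span (SR p k) (Set.range fun j => Φ (eV j)) := by
    intro i
    rw [← span_phi_eq p k M Φ hΦadd hΦsemi hME b]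
    exact hMheight _ (b i).2
  have hGex : ∀ i, ∃ c : Fin d → SR p k,
      ∑ j, c j • Φ (eV j) = ((E : SR p k) ^ r) • eV i :=
    fun i => (Submodule.mem_span_range_iff_exists_fun _).mp (hGmem i)
  choose Gc hGc using hGex
  set G : Matrix (Fin d) (Fin d) (SR p k) := fun j i => Gc i j with hGdef
  -- matrix identities
  have I1 : C * G = ((E : SR p k) ^ r) • (1 : Matrix (Fin d) (Fin d) (SR p k)) := by
    apply matrix_ext p k M b
    intro i
    rw [sum_mul_smul, sum_scalar_smul]
    calc ∑ j, G j i • ∑ l, C l j • eV l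
        = ∑ j, Gc i j • Φ (eV j) := by
          refine Finset.sum_congr rfl fun j _ => ?_; rw [← hC j]
      _ = ((E : SR p k) ^ r) • eV i := hGc i
  have I2 : A * B = ((p : SR p k) ^ N) • 1 := by
    apply matrix_ext p k M b
    intro i
    rw [sum_mul_smul, sum_scalar_smul]
    calc ∑ j, B j i • ∑ l, A l j • eV l
        = ∑ j, B j i • (((p : SR p k) ^ n) • fV j) := by
          refine Finset.sum_congr rfl fun j _ => ?_; rw [← hA j]
      _ = ((p : SR p k) ^ n) • ∑ j, B j i • fV j := by
          rw [Finset.smul_sum]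
          exact Finset.sum_congr rfl fun j _ => (smul_comm _ _ _).symm
      _ = ((p : SR p k) ^ n) • (((p : SR p k) ^ m) • eV i) := by rw [← hB i]
      _ = ((p : SR p k) ^ N) • eV i := by rw [smul_smul, ← pow_add]
  have I3 : B * A = ((p : SR p k) ^ N) • 1 := by
    apply matrix_ext p k M' b'
    intro i
    rw [sum_mul_smul, sum_scalar_smul]
    calc ∑ j, A j i • ∑ l, B l j • fV l
        = ∑ j, A j i • (((p : SR p k) ^ m) • eV j) := by
          refine Finset.sum_congr rfl fun j _ => ?_; rw [← hB j]
      _ = ((p : SR p k) ^ m) • ∑ j, A j i • eV j := by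
          rw [Finset.smul_sum]
          exact Finset.sum_congr rfl fun j _ => (smul_comm _ _ _).symm
      _ = ((p : SR p k) ^ m) • (((p : SR p k) ^ n) • fV i) := by rw [← hA i]
      _ = ((p : SR p k) ^ N) • fV i := by rw [smul_smul, ← pow_add, Nat.add_comm m n]
  -- the semilinear base-change identity
  set Aφ : Matrix (Fin d) (Fin d) (SR p k) := (φS p k).mapMatrix A with hAφdef
  set Bφ : Matrix (Fin d) (Fin d) (SR p k) := (φS p k).mapMatrix B with hBφdef
  have I4 : A * C' = C * Aφ := by
    apply matrix_smul_cancel p k ((p : SR p k) ^ n) (pow_ne_zero _ hpnz)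
    apply matrix_ext p k M b
    intro i
    have W1 : Φ (((p : SR p k) ^ n) • fV i) = ∑ l, (C * Aφ) l i • eV l := by
      rw [hA i, Φ_sum p k Φ hΦadd hΦsemi _ _ heE, sum_mul_smul]
      refine Finset.sum_congr rfl fun j _ => ?_
      rw [← hC j, hAφdef]
      simp only [RingHom.mapMatrix_apply, Matrix.map_apply]
    have W2 : ((p : SR p k) ^ n) • Φ (((p : SR p k) ^ n) • fV i)
        = ∑ l, (((p : SR p k) ^ n) • (A * C')) l i • eV l := by
      rw [Φ_smulR p k Φ hΦsemi _ _ (hfE i), map_pow, map_natCast, hC' i]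
      calc ((p : SR p k) ^ n) • (((p : SR p k) ^ n) • ∑ j, C' j i • fV j)
          = ((p : SR p k) ^ n) • ∑ j, C' j i • (((p : SR p k) ^ n) • fV j) := by
            congr 1
            rw [Finset.smul_sum]
            exact Finset.sum_congr rfl fun j _ => (smul_comm _ _ _).symm
        _ = ((p : SR p k) ^ n) • ∑ j, C' j i • ∑ l, A l j • eV l := by
            congr 1
            exact Finset.sum_congr rfl fun j _ => by rw [← hA j]
        _ = ((p : SR p k) ^ n) • ∑ l, (A * C') l i • eV l := by rw [sum_mul_smul]
        _ = ∑ l, (((p : SR p k) ^ n) • (A * C')) l i • eV l := by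
            rw [Finset.smul_sum]
            exact Finset.sum_congr rfl fun l _ => by
              simp [Matrix.smul_apply, mul_smul]
    rw [← W2]
    have W3 : ((p : SR p k) ^ n) • Φ (((p : SR p k) ^ n) • fV i)
        = ∑ l, (((p : SR p k) ^ n) • (C * Aφ)) l i • eV l := by
      rw [W1, Finset.smul_sum]
      exact Finset.sum_congr rfl fun l _ => by
        simp [Matrix.smul_apply, mul_smul]
    rw [← W3]
  -- φ of I2
  have hφAB : Aφ * Bφ = ((p : SR p k) ^ N) • 1 := by
    have h1 := congrArg ((φS p k).mapMatrix) I2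
    rw [map_mul] at h1
    rw [hAφdef, hBφdef, h1]
    apply Matrix.ext; intro i j
    simp only [RingHom.mapMatrix_apply, Matrix.map_apply, Matrix.smul_apply, smul_eq_mul,
      map_mul, map_pow, map_natCast]
    congr 1
    by_cases hij : i = j
    · subst hij; rw [Matrix.one_apply_eq, map_one]
    · rw [Matrix.one_apply_ne hij, map_zero]
  -- key relation I5
  have hpN : ((p : SR p k) ^ N) ≠ 0 := pow_ne_zero _ hpnz
  have hBAC' : ((p : SR p k) ^ N) • C' = B * (A * C') := by
    rw [← Matrix.mul_assoc, I3, Matrix.smul_mul, Matrix.one_mul]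
  have hmulscal : ∀ (c : SR p k) (X Y : Matrix (Fin d) (Fin d) (SR p k)),
      X * (c • (1 : Matrix (Fin d) (Fin d) (SR p k))) * Y = c • (X * Y) := by
    intro c X Y
    rw [Matrix.mul_smul, Matrix.mul_one, Matrix.smul_mul]
  have I5 : C' * (Bφ * G * A) = ((p : SR p k) ^ N * (E : SR p k) ^ r) • 1 := by
    apply matrix_smul_cancel p k ((p : SR p k) ^ N) hpN
    calc ((p : SR p k) ^ N) • (C' * (Bφ * G * A))
        = (((p : SR p k) ^ N) • C') * (Bφ * G * A) := by rw [Matrix.smul_mul]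
      _ = B * (A * C') * (Bφ * G * A) := by rw [hBAC']
      _ = B * (C * Aφ) * (Bφ * G * A) := by rw [I4]
      _ = (B * C) * (Aφ * Bφ) * (G * A) := by simp only [Matrix.mul_assoc]
      _ = (B * C) * (((p : SR p k) ^ N) • 1) * (G * A) := by rw [hφAB]
      _ = ((p : SR p k) ^ N) • ((B * C) * (G * A)) := hmulscal _ _ _
      _ = ((p : SR p k) ^ N) • (B * (((E : SR p k) ^ r) • 1) * A) := by
          rw [← I1]
          simp only [Matrix.mul_assoc]
      _ = ((p : SR p k) ^ N) • (((E : SR p k) ^ r) • (B * A)) := by rw [hmulscal]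
      _ = ((p : SR p k) ^ N) • (((E : SR p k) ^ r) • (((p : SR p k) ^ N) • 1)) := by rw [I3]
      _ = ((p : SR p k) ^ N) • (((p : SR p k) ^ N * (E : SR p k) ^ r) • 1) := by
          rw [smul_smul, smul_smul, smul_smul]
          congr 1
          ring
  -- determinant analysis
  have hπE : π p k ((E : SR p k)) ≠ 0 := π_coe_monic_ne_zero p k E hE_monic
  have hdetI1 : C.det * G.det = ((E : SR p k) ^ r) ^ d := by
    rw [← Matrix.det_mul, I1, Matrix.det_smul, Matrix.det_one, mul_one, Fintype.card_fin]
  have hπC : π p k C.det ≠ 0 := by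
    intro h0
    have h1 : π p k (C.det * G.det) = 0 := by rw [map_mul, h0, zero_mul]
    rw [hdetI1, map_pow, map_pow] at h1
    exact pow_ne_zero _ (pow_ne_zero _ hπE) h1
  have hdetAB : A.det * B.det = ((p : SR p k) ^ N) ^ d := by
    rw [← Matrix.det_mul, I2, Matrix.det_smul, Matrix.det_one, mul_one, Fintype.card_fin]
  have hAdet0 : A.det ≠ 0 := by
    intro h0
    have : ((p : SR p k) ^ N) ^ d = 0 := by rw [← hdetAB, h0, zero_mul]
    exact pow_ne_zero _ hpN this
  obtain ⟨α, a₀, hadec, ha0⟩ := exists_p_pow p k A.det hAdet0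
  have hdetI4 : A.det * C'.det = C.det * φS p k A.det := by
    have h1 := congrArg Matrix.det I4
    rw [Matrix.det_mul, Matrix.det_mul, hAφdef, ← RingHom.map_det] at h1
    exact h1
  have hkey : C.det * φS p k a₀ = a₀ * C'.det := by
    have h1 : (p : SR p k) ^ α * (a₀ * C'.det)
        = (p : SR p k) ^ α * (C.det * φS p k a₀) := by
      have h2 := hdetI4
      rw [hadec, map_mul, map_pow, map_natCast] at h2
      linear_combination h2
    exact (mul_left_cancel₀ (pow_ne_zero _ hpnz) h1).symm
  have hπC' : π p k C'.det ≠ 0 := by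
    intro h0
    have h1 := congrArg (π p k) hkey
    rw [map_mul, map_mul, h0, mul_zero] at h1
    rcases mul_eq_zero.mp h1 with h | h
    · exact hπC h
    · exact π_φS_ne_zero p k a₀ ha0 h
  -- remove the p-power
  obtain ⟨X', hX'⟩ := descend p k C' hπC' N ((E : SR p k) ^ r) (Bφ * G * A) I5
  -- conclude
  rw [span_phi_eq p k M' Φ hΦadd hΦsemi hM'E b']
  have hEf : ∀ i, ((E : SR p k) ^ r) • fV i = ∑ j, X' j i • Φ (fV j) := by
    intro i
    calc ((E : SR p k) ^ r) • fV i
        = ∑ l, (((E : SR p k) ^ r) • (1 : Matrix (Fin d) (Fin d) (SR p k))) l i • fV l :=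
          (sum_scalar_smul p k _ _ _).symm
      _ = ∑ l, (C' * X') l i • fV l := by rw [hX']
      _ = ∑ j, X' j i • ∑ l, C' l j • fV l := sum_mul_smul p k _ _ _ _
      _ = ∑ j, X' j i • Φ (fV j) := by
          exact Finset.sum_congr rfl fun j _ => by rw [← hC' j]
  have hrepx : ((E : SR p k) ^ r) • x
      = ∑ i, (b'.repr ⟨x, hx⟩ i) • (((E : SR p k) ^ r) • fV i) := by
    conv_lhs => rw [coe_sum_repr p k M' b' x hx]
    rw [Finset.smul_sum]
    exact Finset.sum_congr rfl fun i _ => smul_comm _ _ _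
  rw [hrepx]
  refine Submodule.sum_mem _ fun i _ => Submodule.smul_mem _ _ ?_
  rw [hEf i]
  exact Submodule.sum_mem _ fun j _ =>
    Submodule.smul_mem _ _ (Submodule.subset_span ⟨j, rfl⟩)
end
end

section
/- Let d ≥ 1 and let Φ : (ℰ⁺)^d → (ℰ⁺)^d be an additive φ-semilinear map, i.e. Φ(s·x) = φ(s)·Φ(x) for all s ∈ ℰ⁺ and x ∈ (ℰ⁺)^d. Let 𝔐^{(1)} ⊆ (ℰ⁺)^d be a free 𝔖-submodule of rank d, and suppose there exist an integer c₀ ≥ 0 and a free 𝔖-submodule 𝔑 ⊆ (ℰ⁺)^d stable under Φ with 𝔐^{(1)} ⊆ 𝔑 ⊆ p^{−c₀}·𝔐^{(1)}. Define recursively 𝔐^{(s+1)} = Max(𝔐^{(s)} + ⟨Φ(𝔐^{(s)})⟩_𝔖), where ⟨·⟩_𝔖 denotes the generated 𝔖-submodule. Then the increasing sequence (𝔐^{(s)})_{s≥1} is stationary from rank d on: 𝔐^{(s)} = 𝔐^{(d)} for all s ≥ d. -/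
noncomputable section

open PowerSeries

variable (p : ℕ) [hp : Fact p.Prime] (k : Type) [Field k] [CharP k p] [PerfectRing k p]

theorem pK0_ne_zero : (p : K₀ p k) ≠ 0 := WittVector.FractionRing.p_nonzero p k

theorem valGE_zero (c : ℝ) : valGE p k c 0 := ⟨0, by simp⟩

theorem valGE_add {c : ℝ} {a b : K₀ p k} (ha : valGE p k c a) (hb : valGE p k c b) :
    valGE p k c (a + b) := by
  obtain ⟨w1, rfl⟩ := ha; obtain ⟨w2, rfl⟩ := hb
  exact ⟨w1 + w2, by rw [map_add]; ring⟩

theorem valGE_neg {c : ℝ} {a : K₀ p k} (ha : valGE p k c a) : valGE p k c (-a) := by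
  obtain ⟨w1, rfl⟩ := ha
  exact ⟨-w1, by rw [map_neg]; ring⟩

theorem valGE_mul {c c' : ℝ} {a b : K₀ p k} (ha : valGE p k c a) (hb : valGE p k c' b) :
    valGE p k (c + c') (a * b) := by
  obtain ⟨w1, rfl⟩ := ha; obtain ⟨w2, rfl⟩ := hb
  have hp0 : (p : K₀ p k) ≠ 0 := pK0_ne_zero p k
  have hle : ⌈c + c'⌉ ≤ ⌈c⌉ + ⌈c'⌉ := Int.ceil_add_le c c'
  refine ⟨(p : WittVector p k) ^ (⌈c⌉ + ⌈c'⌉ - ⌈c + c'⌉).toNat * (w1 * w2), ?_⟩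
  rw [map_mul, map_mul, map_pow, map_natCast,
    ← zpow_natCast (p : K₀ p k) (⌈c⌉ + ⌈c'⌉ - ⌈c + c'⌉).toNat,
    Int.toNat_of_nonneg (by omega)]
  have h1 : (⌈c⌉ + ⌈c'⌉) = ⌈c + c'⌉ + (⌈c⌉ + ⌈c'⌉ - ⌈c + c'⌉) := by omega
  calc (p : K₀ p k) ^ ⌈c⌉ * ι p k w1 * ((p : K₀ p k) ^ ⌈c'⌉ * ι p k w2)
      = (p : K₀ p k) ^ (⌈c⌉ + ⌈c'⌉) * (ι p k w1 * ι p k w2) := by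
        rw [zpow_add₀ hp0]; ring
    _ = (p : K₀ p k) ^ ⌈c + c'⌉
          * ((p : K₀ p k) ^ (⌈c⌉ + ⌈c'⌉ - ⌈c + c'⌉) * (ι p k w1 * ι p k w2)) := by
        rw [h1, zpow_add₀ hp0]; ring

theorem valGE_sum {c : ℝ} {α : Type} {s : Finset α} {F : α → K₀ p k}
    (h : ∀ x ∈ s, valGE p k c (F x)) : valGE p k c (∑ x ∈ s, F x) := by
  classical
  induction s using Finset.induction_on with
  | empty => simpa using valGE_zero p k c
  | insert _ _ hx ih =>
      rw [Finset.sum_insert hx]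
      exact valGE_add p k (h _ (Finset.mem_insert_self _ _))
        (ih fun x hxs => h x (Finset.mem_insert_of_mem hxs))

theorem memS_zero {ν : ℝ} : memS p k ν 0 := by
  intro i; rw [map_zero]; exact valGE_zero p k _

theorem memS_add {ν : ℝ} {f g : PowerSeries (K₀ p k)} (hf : memS p k ν f)
    (hg : memS p k ν g) : memS p k ν (f + g) := by
  intro i; rw [map_add]; exact valGE_add p k (hf i) (hg i)

theorem memS_neg {ν : ℝ} {f : PowerSeries (K₀ p k)} (hf : memS p k ν f) :
    memS p k ν (-f) := by
  intro i; rw [map_neg]; exact valGE_neg p k (hf i)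

theorem memS_one {ν : ℝ} : memS p k ν 1 := by
  intro i
  rw [PowerSeries.coeff_one]
  split_ifs with h
  · subst h
    exact ⟨1, by simp⟩
  · exact valGE_zero p k _

theorem memS_mul {ν : ℝ} {f g : PowerSeries (K₀ p k)} (hf : memS p k ν f)
    (hg : memS p k ν g) : memS p k ν (f * g) := by
  intro i
  rw [PowerSeries.coeff_mul]
  apply valGE_sum
  intro x hx
  have hxi : x.1 + x.2 = i := Finset.HasAntidiagonal.mem_antidiagonal.mp hx
  have h := valGE_mul p k (hf x.1) (hg x.2)
  have harg : (-(ν * x.1) + -(ν * x.2)) = -(ν * i) := by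
    rw [← hxi]; push_cast; ring
  rwa [harg] at h

theorem memS_C_p_pow {ν : ℝ} (n : ℕ) :
    memS p k ν (PowerSeries.C (R := K₀ p k) ((p : K₀ p k) ^ n)) := by
  intro i
  rw [PowerSeries.coeff_C]
  split_ifs with h
  · subst h
    refine ⟨(p : WittVector p k) ^ n, ?_⟩
    simp [map_pow]
  · exact valGE_zero p k _


theorem memS_map (f : SR p k) : memS p k 0 (PowerSeries.map (ι p k) f) := by
  intro i
  refine ⟨PowerSeries.coeff (R := WittVector p k) i f, ?_⟩
  simp [PowerSeries.coeff_map]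

theorem memE_zero : memE p k 0 (0 : PowerSeries (K₀ p k)) :=
  ⟨0, by simpa using memS_zero p k⟩

theorem memE_add {f g : PowerSeries (K₀ p k)} (hf : memE p k 0 f) (hg : memE p k 0 g) :
    memE p k 0 (f + g) := by
  obtain ⟨n, hn⟩ := hf; obtain ⟨m, hm⟩ := hg
  refine ⟨n + m, ?_⟩
  have h := memS_add p k (memS_mul p k (memS_C_p_pow p k m) hn)
    (memS_mul p k (memS_C_p_pow p k n) hm)
  have heq : PowerSeries.C (R := K₀ p k) ((p : K₀ p k) ^ (n + m)) * (f + g)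
      = PowerSeries.C (R := K₀ p k) ((p : K₀ p k) ^ m)
          * (PowerSeries.C (R := K₀ p k) ((p : K₀ p k) ^ n) * f)
        + PowerSeries.C (R := K₀ p k) ((p : K₀ p k) ^ n)
          * (PowerSeries.C (R := K₀ p k) ((p : K₀ p k) ^ m) * g) := by
    rw [pow_add, map_mul]; ring
  rwa [heq]

theorem memE_smul (r : SR p k) {f : PowerSeries (K₀ p k)} (hf : memE p k 0 f) :
    memE p k 0 (r • f) := by
  obtain ⟨n, hn⟩ := hf
  refine ⟨n, ?_⟩
  have h := memS_mul p k (memS_map p k r) hn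
  have heq : PowerSeries.C (R := K₀ p k) ((p : K₀ p k) ^ n) * (r • f)
      = PowerSeries.map (ι p k) r * (PowerSeries.C (R := K₀ p k) ((p : K₀ p k) ^ n) * f) := by
    rw [Algebra.smul_def]
    show _ * ((PowerSeries.map (ι p k)) r * f) = _
    ring
  rwa [heq]

/-- The operation `Max` of Iwasawa theory, as an operation on `𝔖`-submodules of `K₀[[u]]^d`:
`Max(N) = {x ∈ (ℰ⁺)^d | ∃ n, pⁿ·x ∈ N and uⁿ·x ∈ N}`. -/
def MaxSub (d : ℕ) (N : Submodule (SR p k) (Fin d → PowerSeries (K₀ p k))) :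
    Submodule (SR p k) (Fin d → PowerSeries (K₀ p k)) where
  carrier := {x | (∀ j, memE p k 0 (x j)) ∧
    ∃ n : ℕ, ((p : SR p k) ^ n) • x ∈ N ∧ ((PowerSeries.X : SR p k) ^ n) • x ∈ N}
  zero_mem' := by
    refine ⟨fun j => memE_zero p k, 0, ?_, ?_⟩ <;> · rw [smul_zero]; exact N.zero_mem
  add_mem' := by
    rintro x y ⟨hxE, n1, hxp, hxu⟩ ⟨hyE, n2, hyp, hyu⟩
    refine ⟨fun j => memE_add p k (hxE j) (hyE j), n1 + n2, ?_, ?_⟩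
    · have hx' : ((p : SR p k) ^ (n1 + n2)) • x ∈ N := by
        rw [add_comm, pow_add, ← smul_smul]
        exact N.smul_mem _ hxp
      have hy' : ((p : SR p k) ^ (n1 + n2)) • y ∈ N := by
        rw [pow_add, ← smul_smul]
        exact N.smul_mem _ hyp
      rw [smul_add]; exact N.add_mem hx' hy'
    · have hx' : ((PowerSeries.X : SR p k) ^ (n1 + n2)) • x ∈ N := by
        rw [add_comm, pow_add, ← smul_smul]
        exact N.smul_mem _ hxu
      have hy' : ((PowerSeries.X : SR p k) ^ (n1 + n2)) • y ∈ N := by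
        rw [pow_add, ← smul_smul]
        exact N.smul_mem _ hyu
      rw [smul_add]; exact N.add_mem hx' hy'
  smul_mem' := by
    rintro r x ⟨hxE, n, hxp, hxu⟩
    refine ⟨fun j => ?_, n, ?_, ?_⟩
    · have : (r • x) j = r • (x j) := rfl
      rw [this]
      exact memE_smul p k r (hxE j)
    · rw [smul_comm]; exact N.smul_mem _ hxp
    · rw [smul_comm]; exact N.smul_mem _ hxu

namespace Stmt13
set_option linter.unusedSectionVars false
open PowerSeries

variable (p : ℕ) [hp : Fact p.Prime] (k : Type) [Field k] [CharP k p] [PerfectRing k p]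

theorem iota_injective : Function.Injective (ι p k) :=
  IsFractionRing.injective _ _

theorem pW_ne_zero : (p : WittVector p k) ≠ 0 := WittVector.p_nonzero p _

theorem mapS_injective : Function.Injective (PowerSeries.map (ι p k)) := by
  intro f g h
  apply PowerSeries.ext; intro n
  have h2 := congrArg (PowerSeries.coeff (R := K₀ p k) n) h
  rw [PowerSeries.coeff_map, PowerSeries.coeff_map] at h2
  exact iota_injective p k h2

theorem smul_def' (r : SR p k) (f : PowerSeries (K₀ p k)) :
    r • f = PowerSeries.map (ι p k) r * f := rfl

theorem pS_eq : ((p : SR p k)) = PowerSeries.C ((p : WittVector p k)) :=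
  (map_natCast (PowerSeries.C (R := WittVector p k)) p).symm

theorem pPS_eq : ((p : PowerSeries (K₀ p k))) = PowerSeries.C ((p : K₀ p k)) :=
  (map_natCast (PowerSeries.C (R := K₀ p k)) p).symm

theorem pSR_ne_zero : (p : SR p k) ≠ 0 := by
  intro h
  apply pW_ne_zero p k
  have h2 := congrArg (PowerSeries.constantCoeff (R := WittVector p k)) h
  simpa using h2

theorem pSR_pow_ne_zero (n : ℕ) : ((p : SR p k) ^ n) ≠ 0 :=
  pow_ne_zero n (pSR_ne_zero p k)

theorem coeff_p_pow_mul (a : ℕ) (f : SR p k) (t : ℕ) :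
    PowerSeries.coeff t (((p : SR p k) ^ a) * f)
      = (p : WittVector p k) ^ a * PowerSeries.coeff t f := by
  rw [pS_eq, ← map_pow, PowerSeries.coeff_C_mul]

variable {d : ℕ}

theorem smul_cancel {r : SR p k} (hr : r ≠ 0)
    {x y : Fin d → PowerSeries (K₀ p k)} (h : r • x = r • y) : x = y := by
  funext j
  have hj : r • x j = r • y j := congrFun h j
  rw [smul_def', smul_def'] at hj
  have hmr : PowerSeries.map (ι p k) r ≠ 0 := fun h0 => hr (mapS_injective p k (by rw [h0, map_zero]))
  exact mul_left_cancel₀ hmr hj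

theorem exists_p_pow_smul (n : ℕ) (x : Fin d → PowerSeries (K₀ p k)) :
    ∃ y, ((p : SR p k) ^ n) • y = x := by
  refine ⟨fun j => PowerSeries.C (((p : K₀ p k) ^ n)⁻¹) * x j, ?_⟩
  funext j
  show ((p : SR p k) ^ n) • (PowerSeries.C (((p : K₀ p k) ^ n)⁻¹) * x j) = x j
  rw [smul_def', map_pow, map_natCast, pPS_eq, ← map_pow, ← mul_assoc, ← map_mul,
    mul_inv_cancel₀ (pow_ne_zero n (pK0_ne_zero p k)), map_one, one_mul]

end Stmt13
namespace Stmt13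
set_option linter.unusedSectionVars false
set_option maxHeartbeats 1000000
open PowerSeries

variable (p : ℕ) [hp : Fact p.Prime] (k : Type) [Field k] [CharP k p] [PerfectRing k p]

theorem X_pow_smul_apply {d : ℕ} (n : ℕ) (x : Fin d → PowerSeries (K₀ p k)) (j : Fin d) :
    (((X : SR p k) ^ n) • x) j = (X : PowerSeries (K₀ p k)) ^ n * x j := by
  show ((X : SR p k) ^ n) • x j = _
  rw [smul_def', map_pow, PowerSeries.map_X]

theorem p_pow_smul_apply {d : ℕ} (n : ℕ) (x : Fin d → PowerSeries (K₀ p k)) (j : Fin d) :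
    (((p : SR p k) ^ n) • x) j = (p : PowerSeries (K₀ p k)) ^ n * x j := by
  show ((p : SR p k) ^ n) • x j = _
  rw [smul_def', map_pow, map_natCast]

theorem memE_of_X_pow_mul {n : ℕ} {f : PowerSeries (K₀ p k)}
    (h : memE p k 0 ((X : PowerSeries (K₀ p k)) ^ n * f)) : memE p k 0 f := by
  obtain ⟨m, hm⟩ := h
  refine ⟨m, fun i => ?_⟩
  have h2 := hm (i + n)
  have e1 : PowerSeries.C (R := K₀ p k) ((p : K₀ p k) ^ m) * ((X : PowerSeries (K₀ p k)) ^ n * f)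
      = X ^ n * (PowerSeries.C (R := K₀ p k) ((p : K₀ p k) ^ m) * f) := by ring
  rw [e1, PowerSeries.coeff_X_pow_mul] at h2
  have e2 : (-(0 * ((i : ℕ) : ℝ))) = (-(0 * (((i + n : ℕ) : ℕ) : ℝ))) := by push_cast; ring
  rw [e2]; exact h2

theorem memE_of_p_pow_mul {n : ℕ} {f : PowerSeries (K₀ p k)}
    (h : memE p k 0 ((p : PowerSeries (K₀ p k)) ^ n * f)) : memE p k 0 f := by
  obtain ⟨m, hm⟩ := h
  refine ⟨m + n, fun i => ?_⟩
  have e1 : PowerSeries.C (R := K₀ p k) ((p : K₀ p k) ^ (m + n)) * f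
      = PowerSeries.C (R := K₀ p k) ((p : K₀ p k) ^ m) * ((p : PowerSeries (K₀ p k)) ^ n * f) := by
    rw [pPS_eq, ← map_pow, ← mul_assoc, ← map_mul, ← pow_add]
  rw [e1]; exact hm i

/-- The submodule of vectors with all components in `ℰ⁺`. -/
def Ev (d : ℕ) : Submodule (SR p k) (Fin d → PowerSeries (K₀ p k)) where
  carrier := {x | ∀ j, memE p k 0 (x j)}
  zero_mem' := fun _ => memE_zero p k
  add_mem' := fun hx hy j => memE_add p k (hx j) (hy j)
  smul_mem' := fun r x hx j => by
    have h : (r • x) j = r • x j := rfl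
    rw [h]; exact memE_smul p k r (hx j)

theorem mem_Ev_iff {d : ℕ} {x : Fin d → PowerSeries (K₀ p k)} :
    x ∈ Ev p k d ↔ ∀ j, memE p k 0 (x j) := Iff.rfl

/-- u-saturation of a submodule. -/
def usat {d : ℕ} (A : Submodule (SR p k) (Fin d → PowerSeries (K₀ p k))) :
    Submodule (SR p k) (Fin d → PowerSeries (K₀ p k)) where
  carrier := {x | ∃ n : ℕ, ((X : SR p k) ^ n) • x ∈ A}
  zero_mem' := ⟨0, by rw [smul_zero]; exact A.zero_mem⟩
  add_mem' := by
    rintro x y ⟨n, hn⟩ ⟨m, hm⟩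
    refine ⟨n + m, ?_⟩
    rw [smul_add]
    refine A.add_mem ?_ ?_
    · rw [add_comm n m, pow_add, ← smul_smul]; exact A.smul_mem _ hn
    · rw [pow_add, ← smul_smul]; exact A.smul_mem _ hm
  smul_mem' := by
    rintro r x ⟨n, hn⟩
    exact ⟨n, by rw [smul_comm]; exact A.smul_mem _ hn⟩

theorem mem_usat_iff {d : ℕ} {A : Submodule (SR p k) (Fin d → PowerSeries (K₀ p k))}
    {x : Fin d → PowerSeries (K₀ p k)} :
    x ∈ usat p k A ↔ ∃ n : ℕ, ((X : SR p k) ^ n) • x ∈ A := Iff.rfl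

theorem le_usat {d : ℕ} (A : Submodule (SR p k) (Fin d → PowerSeries (K₀ p k))) :
    A ≤ usat p k A := fun x hx => ⟨0, by rw [pow_zero, one_smul]; exact hx⟩

theorem usat_mono {d : ℕ} {A B : Submodule (SR p k) (Fin d → PowerSeries (K₀ p k))}
    (h : A ≤ B) : usat p k A ≤ usat p k B := by
  rintro x ⟨n, hn⟩; exact ⟨n, h hn⟩

theorem usat_usat {d : ℕ} {A : Submodule (SR p k) (Fin d → PowerSeries (K₀ p k))} :
    usat p k (usat p k A) ≤ usat p k A := by
  rintro x ⟨n, m, hnm⟩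
  refine ⟨m + n, ?_⟩
  rw [pow_add, ← smul_smul]; exact hnm

theorem usat_le_Ev {d : ℕ} {A : Submodule (SR p k) (Fin d → PowerSeries (K₀ p k))}
    (h : A ≤ Ev p k d) : usat p k A ≤ Ev p k d := by
  rintro x ⟨n, hn⟩ j
  have h2 := h hn j
  rw [X_pow_smul_apply] at h2
  exact memE_of_X_pow_mul p k h2

/-- `p^j`-multiples of a submodule. -/
def psmul {d : ℕ} (j : ℕ) (A : Submodule (SR p k) (Fin d → PowerSeries (K₀ p k))) :
    Submodule (SR p k) (Fin d → PowerSeries (K₀ p k)) where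
  carrier := {x | ∃ y ∈ A, ((p : SR p k) ^ j) • y = x}
  zero_mem' := ⟨0, A.zero_mem, smul_zero _⟩
  add_mem' := by
    rintro x y ⟨a, ha, rfl⟩ ⟨b, hb, rfl⟩
    exact ⟨a + b, A.add_mem ha hb, smul_add _ _ _⟩
  smul_mem' := by
    rintro r x ⟨a, ha, rfl⟩
    exact ⟨r • a, A.smul_mem r ha, (smul_comm _ _ _)⟩

theorem mem_psmul_iff {d : ℕ} {j : ℕ} {A : Submodule (SR p k) (Fin d → PowerSeries (K₀ p k))}
    {x : Fin d → PowerSeries (K₀ p k)} :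
    x ∈ psmul p k j A ↔ ∃ y ∈ A, ((p : SR p k) ^ j) • y = x := Iff.rfl

theorem psmul_le {d : ℕ} (j : ℕ) {A : Submodule (SR p k) (Fin d → PowerSeries (K₀ p k))} :
    psmul p k j A ≤ A := by
  rintro x ⟨y, hy, rfl⟩; exact A.smul_mem _ hy

theorem psmul_mono {d : ℕ} (j : ℕ) {A B : Submodule (SR p k) (Fin d → PowerSeries (K₀ p k))}
    (h : A ≤ B) : psmul p k j A ≤ psmul p k j B := by
  rintro x ⟨y, hy, rfl⟩; exact ⟨y, h hy, rfl⟩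

theorem usat_psmul {d : ℕ} {j n : ℕ} {A : Submodule (SR p k) (Fin d → PowerSeries (K₀ p k))}
    (husat : usat p k A ≤ A) {x : Fin d → PowerSeries (K₀ p k)}
    (h : ((X : SR p k) ^ n) • x ∈ psmul p k j A) : x ∈ psmul p k j A := by
  obtain ⟨y, hy, hxy⟩ := h
  obtain ⟨z, hz⟩ := exists_p_pow_smul p k j x
  refine ⟨z, ?_, hz⟩
  apply husat
  refine ⟨n, ?_⟩
  have : ((p : SR p k) ^ j) • (((X : SR p k) ^ n) • z) = ((p : SR p k) ^ j) • y := by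
    rw [smul_comm, hz, hxy]
  have h2 := smul_cancel p k (pSR_pow_ne_zero p k j) this
  rw [h2]; exact hy

end Stmt13
namespace Stmt13
set_option linter.unusedSectionVars false
set_option maxHeartbeats 1000000
set_option synthInstance.maxHeartbeats 1000000
open PowerSeries

variable (p : ℕ) [hp : Fact p.Prime] (k : Type) [Field k] [CharP k p] [PerfectRing k p]

theorem W_exists_max_pow {w : WittVector p k} (hw : w ≠ 0) :
    ∃ m, ¬ ((p : WittVector p k) ^ (m + 1) ∣ w) := by
  obtain ⟨m, b, hb⟩ := WittVector.exists_eq_pow_p_mul' w hw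
  refine ⟨m, fun hdvd => ?_⟩
  obtain ⟨c, hc⟩ := hdvd
  have h2 : (p : WittVector p k) ^ m * (b : WittVector p k)
      = (p : WittVector p k) ^ m * ((p : WittVector p k) * c) := by
    rw [← hb, hc]; ring
  have h3 := mul_left_cancel₀ (pow_ne_zero m (pW_ne_zero p k)) h2
  have h4 : IsUnit ((p : WittVector p k) * c) := h3 ▸ b.isUnit
  exact (WittVector.irreducible p).not_isUnit (isUnit_of_mul_isUnit_left h4)

theorem W_isUnit_of_not_dvd {w : WittVector p k} (h : ¬ (p : WittVector p k) ∣ w) :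
    IsUnit w := by
  have hw : w ≠ 0 := fun h0 => h (h0 ▸ dvd_zero _)
  obtain ⟨m, b, hb⟩ := WittVector.exists_eq_pow_p_mul' w hw
  cases m with
  | zero => rw [hb, pow_zero, one_mul]; exact b.isUnit
  | succ m =>
      exact absurd ⟨(p : WittVector p k) ^ m * b, by rw [hb, pow_succ]; ring⟩ h

theorem SR_p_pow_dvd_coeff {j : ℕ} {c : SR p k} (h : (p : SR p k) ^ j ∣ c) (i : ℕ) :
    (p : WittVector p k) ^ j ∣ PowerSeries.coeff i c := by
  obtain ⟨g, hg⟩ := h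
  exact ⟨PowerSeries.coeff i g, by rw [hg, coeff_p_pow_mul]⟩

theorem SR_p_dvd_of_coeffs {c : SR p k}
    (h : ∀ i, (p : WittVector p k) ∣ PowerSeries.coeff i c) : (p : SR p k) ∣ c := by
  choose g hg using h
  refine ⟨PowerSeries.mk g, ?_⟩
  apply PowerSeries.ext; intro i
  have : ((p : SR p k) * PowerSeries.mk g) = ((p : SR p k) ^ 1 * PowerSeries.mk g) := by
    rw [pow_one]
  rw [this, coeff_p_pow_mul, pow_one, PowerSeries.coeff_mk]
  exact hg i

theorem SR_exists_p_factor {c : SR p k} (hc : c ≠ 0) :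
    ∃ J c', c = (p : SR p k) ^ J * c' ∧ ¬ ((p : SR p k) ∣ c') := by
  classical
  have hex : ∃ i, PowerSeries.coeff i c ≠ 0 := by
    by_contra h; push_neg at h; exact hc (PowerSeries.ext h)
  obtain ⟨i0, hi0⟩ := hex
  obtain ⟨m, hm⟩ := W_exists_max_pow p k hi0
  have hbd : ∀ j, (p : SR p k) ^ j ∣ c → j ≤ m := by
    intro j hj
    by_contra hgt
    push_neg at hgt
    exact hm (dvd_trans (pow_dvd_pow _ hgt) (SR_p_pow_dvd_coeff p k hj i0))
  set J := Nat.findGreatest (fun j => (p : SR p k) ^ j ∣ c) m with hJdef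
  have hJ : (p : SR p k) ^ J ∣ c :=
    Nat.findGreatest_spec (P := fun j => (p : SR p k) ^ j ∣ c) (Nat.zero_le m)
      (by show (p : SR p k) ^ 0 ∣ c; rw [pow_zero]; exact one_dvd c)
  have hnot : ¬ ((p : SR p k) ^ (J + 1) ∣ c) := by
    intro h
    have h1 : J + 1 ≤ m := hbd _ h
    have h2 := Nat.le_findGreatest (P := fun j => (p : SR p k) ^ j ∣ c) h1 h
    omega
  obtain ⟨c', hc'⟩ := hJ
  refine ⟨J, c', hc', fun hdvd => ?_⟩
  obtain ⟨e, he⟩ := hdvd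
  exact hnot ⟨e, by rw [hc', he, pow_succ]; ring⟩

theorem SR_unit_decomp {c : SR p k} (h : ¬ ((p : SR p k) ∣ c)) :
    ∃ (e : ℕ) (γ δ : SR p k), IsUnit γ ∧
      c = (X : SR p k) ^ e * γ + (p : SR p k) * δ := by
  classical
  have hex : ∃ i, ¬ (p : WittVector p k) ∣ PowerSeries.coeff i c := by
    by_contra hh; push_neg at hh
    exact h (SR_p_dvd_of_coeffs p k fun i => (hh i))
  set e := Nat.find hex with he_def
  have he : ¬ (p : WittVector p k) ∣ PowerSeries.coeff e c := Nat.find_spec hex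
  have hlt : ∀ t, t < e → (p : WittVector p k) ∣ PowerSeries.coeff t c := by
    intro t ht
    by_contra hcon
    exact absurd hcon (not_not.mpr (of_not_not (Nat.find_min hex ht)))
  set γ : SR p k := PowerSeries.mk (fun t => PowerSeries.coeff (e + t) c) with hγ
  have hγu : IsUnit γ := by
    rw [PowerSeries.isUnit_iff_constantCoeff]
    have hcc : PowerSeries.constantCoeff γ = PowerSeries.coeff e c := by
      rw [← PowerSeries.coeff_zero_eq_constantCoeff_apply, hγ, PowerSeries.coeff_mk, add_zero]
    rw [hcc]
    exact W_isUnit_of_not_dvd p k he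
  set δ : SR p k := PowerSeries.mk
    (fun t => if ht : t < e then Classical.choose (hlt t ht) else 0) with hδ
  refine ⟨e, γ, δ, hγu, ?_⟩
  apply PowerSeries.ext; intro t
  rw [map_add, coeff_X_pow_mul', pS_eq, PowerSeries.coeff_C_mul]
  simp only [hδ, hγ, PowerSeries.coeff_mk]
  by_cases ht : e ≤ t
  · rw [if_pos ht, dif_neg (not_lt.mpr ht), mul_zero, add_zero]
    have h5 : e + (t - e) = t := by omega
    rw [h5]
  · rw [if_neg ht, dif_pos (lt_of_not_ge ht), zero_add]
    exact Classical.choose_spec (hlt t (lt_of_not_ge ht))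

theorem mem_of_mixed_sat {d : ℕ} {F : Submodule (SR p k) (Fin d → PowerSeries (K₀ p k))}
    {ι : Type*} (B : Module.Basis ι (SR p k) F) {x : Fin d → PowerSeries (K₀ p k)}
    {a b : ℕ} (h1 : ((p : SR p k) ^ a) • x ∈ F) (h2 : ((X : SR p k) ^ b) • x ∈ F) :
    x ∈ F := by
  classical
  set n1 : F := ⟨_, h1⟩ with hn1
  set n2 : F := ⟨_, h2⟩ with hn2
  have key : ((X : SR p k) ^ b) • n1 = ((p : SR p k) ^ a) • n2 := by
    apply Subtype.ext
    show ((X : SR p k) ^ b) • (((p : SR p k) ^ a) • x)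
        = ((p : SR p k) ^ a) • (((X : SR p k) ^ b) • x)
    rw [smul_smul, smul_smul, mul_comm]
  have hk := congrArg B.repr key
  rw [map_smul, map_smul] at hk
  -- shift function
  set sh : SR p k → SR p k :=
    (fun f => PowerSeries.mk fun t => PowerSeries.coeff (t + b) f) with hsh
  have hsh0 : sh 0 = 0 := by
    apply PowerSeries.ext; intro t
    rw [hsh]; simp [PowerSeries.coeff_mk]
  set g := Finsupp.mapRange sh hsh0 (B.repr n2) with hg
  have hclaim : B.repr n1 = ((p : SR p k) ^ a) • g := by
    apply Finsupp.ext; intro i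
    have hi := DFunLike.congr_fun hk i
    rw [Finsupp.smul_apply, Finsupp.smul_apply, smul_eq_mul, smul_eq_mul] at hi
    rw [Finsupp.smul_apply, smul_eq_mul, hg, Finsupp.mapRange_apply]
    apply PowerSeries.ext; intro t
    have h3 : PowerSeries.coeff t (B.repr n1 i)
        = PowerSeries.coeff (t + b) ((X : SR p k) ^ b * B.repr n1 i) := by
      rw [PowerSeries.coeff_X_pow_mul]
    rw [h3, hi, coeff_p_pow_mul, coeff_p_pow_mul]
    simp only [hsh, PowerSeries.coeff_mk]
  set y := B.repr.symm g with hy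
  have hyF : ((p : SR p k) ^ a) • y = n1 := by
    apply B.repr.injective
    rw [map_smul, hy, LinearEquiv.apply_symm_apply, hclaim]
  have hcoe : ((p : SR p k) ^ a) • (y : Fin d → PowerSeries (K₀ p k)) = ((p : SR p k) ^ a) • x := by
    have := congrArg (Subtype.val) hyF
    simpa using this
  have hx : x = (y : Fin d → PowerSeries (K₀ p k)) :=
    (smul_cancel p k (pSR_pow_ne_zero p k a) hcoe).symm
  rw [hx]; exact y.2

end Stmt13
namespace Stmt13
set_option linter.unusedSectionVars false
set_option maxHeartbeats 1000000
set_option synthInstance.maxHeartbeats 1000000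
open PowerSeries

/-- All data and hypotheses of the theorem, bundled. -/
structure Setup (p : ℕ) [hp : Fact p.Prime] (k : Type) [Field k] [CharP k p]
    [PerfectRing k p] (d : ℕ) where
  hd : 1 ≤ d
  Φ : (Fin d → PowerSeries (K₀ p k)) → (Fin d → PowerSeries (K₀ p k))
  hΦE : ∀ x, (∀ j, memE p k 0 (x j)) → ∀ j, memE p k 0 (Φ x j)
  hΦadd : ∀ x y, (∀ j, memE p k 0 (x j)) → (∀ j, memE p k 0 (y j)) →
      Φ (x + y) = Φ x + Φ y
  hΦsemi : ∀ (s : PowerSeries (K₀ p k)) x, memE p k 0 s → (∀ j, memE p k 0 (x j)) →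
      Φ (s • x) = φps p k s • Φ x
  M : ℕ → Submodule (SR p k) (Fin d → PowerSeries (K₀ p k))
  hM1E : ∀ x ∈ M 1, ∀ j, memE p k 0 (x j)
  bas : Module.Basis (Fin d) (SR p k) (M 1)
  c₀ : ℕ
  N : Submodule (SR p k) (Fin d → PowerSeries (K₀ p k))
  hNE : ∀ x ∈ N, ∀ j, memE p k 0 (x j)
  hNfree : Module.Free (SR p k) N
  hNstable : ∀ x ∈ N, Φ x ∈ N
  hMN : M 1 ≤ N
  hNM : ∀ x ∈ N, ((p : SR p k) ^ c₀) • x ∈ M 1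
  hrec : ∀ s : ℕ, 1 ≤ s →
      M (s + 1) = MaxSub p k d (M s ⊔ Submodule.span (SR p k) (Φ '' (M s : Set _)))

namespace Setup

variable {p : ℕ} [hp : Fact p.Prime] {k : Type} [Field k] [CharP k p] [PerfectRing k p]
variable {d : ℕ} (S : Setup p k d)

theorem mem_MaxSub {A : Submodule (SR p k) (Fin d → PowerSeries (K₀ p k))}
    {x : Fin d → PowerSeries (K₀ p k)} :
    x ∈ MaxSub p k d A ↔ (∀ j, memE p k 0 (x j)) ∧
      ∃ n : ℕ, ((p : SR p k) ^ n) • x ∈ A ∧ ((X : SR p k) ^ n) • x ∈ A :=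
  Iff.rfl

/-- The module `M s ⊔ ⟨Φ(M s)⟩`. -/
def A (s : ℕ) : Submodule (SR p k) (Fin d → PowerSeries (K₀ p k)) :=
  S.M s ⊔ Submodule.span (SR p k) (S.Φ '' (S.M s : Set _))

theorem hrec' (s : ℕ) (hs : 1 ≤ s) : S.M (s + 1) = MaxSub p k d (S.A s) :=
  S.hrec s hs

theorem pad_pow_smul_mem {r : SR p k} {A : Submodule (SR p k) (Fin d → PowerSeries (K₀ p k))}
    {x : Fin d → PowerSeries (K₀ p k)} {a b : ℕ} (hab : a ≤ b)
    (h : (r ^ a) • x ∈ A) : (r ^ b) • x ∈ A := by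
  have hb : r ^ b = r ^ (b - a) * r ^ a := by rw [← pow_add]; congr 1; omega
  rw [hb, ← smul_smul]
  exact A.smul_mem _ h

theorem M_le_Ev : ∀ s, 1 ≤ s → S.M s ≤ Ev p k d := by
  intro s hs
  rcases Nat.exists_eq_add_of_le hs with ⟨t, rfl⟩
  cases t with
  | zero => exact fun x hx => S.hM1E x hx
  | succ t =>
      intro x hx
      rw [show 1 + (t+1) = (1+t) + 1 by omega, S.hrec' (1+t) (by omega)] at hx
      exact ((mem_MaxSub).1 hx).1

theorem span_Phi_le_Ev (s : ℕ) (hs : 1 ≤ s) :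
    Submodule.span (SR p k) (S.Φ '' (S.M s : Set _)) ≤ Ev p k d := by
  rw [Submodule.span_le]
  rintro _ ⟨y, hy, rfl⟩
  exact S.hΦE y (S.M_le_Ev s hs hy)

theorem A_le_Ev (s : ℕ) (hs : 1 ≤ s) : S.A s ≤ Ev p k d :=
  sup_le (S.M_le_Ev s hs) (S.span_Phi_le_Ev s hs)

theorem le_MaxSub {B : Submodule (SR p k) (Fin d → PowerSeries (K₀ p k))}
    (hB : B ≤ Ev p k d) : B ≤ MaxSub p k d B := by
  intro x hx
  refine (mem_MaxSub).2 ⟨hB hx, 0, ?_, ?_⟩ <;>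
    · rw [pow_zero, one_smul]; exact hx

theorem M_le_succ (s : ℕ) (hs : 1 ≤ s) : S.M s ≤ S.M (s + 1) := by
  rw [S.hrec' s hs]
  exact le_trans (le_trans le_sup_left (le_MaxSub (S.A_le_Ev s hs)))
    (le_of_eq rfl)

theorem M_mono {a b : ℕ} (ha : 1 ≤ a) (hab : a ≤ b) : S.M a ≤ S.M b := by
  induction b, hab using Nat.le_induction with
  | base => exact le_rfl
  | succ b hab ih => exact le_trans ih (S.M_le_succ b (le_trans ha hab))

theorem Phi_M_mem (s : ℕ) (hs : 1 ≤ s) {x : Fin d → PowerSeries (K₀ p k)}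
    (hx : x ∈ S.M s) : S.Φ x ∈ S.M (s + 1) := by
  rw [S.hrec' s hs]
  refine le_MaxSub (S.A_le_Ev s hs) ?_
  exact Submodule.mem_sup_right (Submodule.subset_span ⟨x, hx, rfl⟩)

theorem M_le_N : ∀ s, 1 ≤ s → S.M s ≤ S.N := by
  intro s hs
  rcases Nat.exists_eq_add_of_le hs with ⟨t, rfl⟩
  induction t with
  | zero => exact S.hMN
  | succ t ih =>
      rw [show 1 + (t+1) = (1+t) + 1 by omega, S.hrec' (1+t) (by omega)]
      intro x hx
      obtain ⟨hE, n, hpn, hun⟩ := (mem_MaxSub).1 hx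
      have hA_le_N : S.A (1+t) ≤ S.N := by
        refine sup_le (ih (by omega)) ?_
        rw [Submodule.span_le]
        rintro _ ⟨y, hy, rfl⟩
        exact S.hNstable y (ih (by omega) hy)
      letI := S.hNfree
      exact mem_of_mixed_sat p k (Module.Free.chooseBasis (SR p k) S.N)
        (hA_le_N hpn) (hA_le_N hun)

theorem A_le_N (s : ℕ) (hs : 1 ≤ s) : S.A s ≤ S.N := by
  refine sup_le (S.M_le_N s hs) ?_
  rw [Submodule.span_le]
  rintro _ ⟨y, hy, rfl⟩
  exact S.hNstable y (S.M_le_N s hs hy)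

end Setup
end Stmt13
namespace Stmt13
set_option linter.unusedSectionVars false
set_option maxHeartbeats 1000000
set_option synthInstance.maxHeartbeats 1000000
open PowerSeries

variable (p : ℕ) [hp : Fact p.Prime] (k : Type) [Field k] [CharP k p] [PerfectRing k p]

theorem phips_C (a : K₀ p k) :
    φps p k (PowerSeries.C a) = PowerSeries.C (σ p k a) := by
  apply PowerSeries.ext; intro i
  simp only [φps, PowerSeries.coeff_mk, PowerSeries.coeff_C]
  by_cases hi : i = 0
  · subst hi
    rw [if_pos (dvd_zero p), if_pos rfl, Nat.zero_div]
    simp [PowerSeries.coeff_zero_eq_constantCoeff]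
  · rw [if_neg hi]
    by_cases hdvd : p ∣ i
    · rw [if_pos hdvd]
      have hip : i / p ≠ 0 := by
        obtain ⟨c, rfl⟩ := hdvd
        have hc : c ≠ 0 := by rintro rfl; simp at hi
        rw [Nat.mul_div_cancel_left c hp.out.pos]
        exact hc
      rw [if_neg hip, map_zero]
    · rw [if_neg hdvd]

theorem phips_X_pow (n : ℕ) :
    φps p k ((X : PowerSeries (K₀ p k)) ^ n) = X ^ (p * n) := by
  apply PowerSeries.ext; intro i
  simp only [φps, PowerSeries.coeff_mk, PowerSeries.coeff_X_pow]
  by_cases h : i = p * n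
  · subst h
    rw [if_pos ⟨n, rfl⟩, if_pos (Nat.mul_div_cancel_left n hp.out.pos), if_pos rfl, map_one]
  · rw [if_neg h]
    by_cases hdvd : p ∣ i
    · rw [if_pos hdvd]
      have : i / p ≠ n := by
        intro he
        apply h
        obtain ⟨c, rfl⟩ := hdvd
        rw [Nat.mul_div_cancel_left c hp.out.pos] at he
        rw [he]
      rw [if_neg this, map_zero]
    · rw [if_neg hdvd]

theorem phips_p_pow (j : ℕ) :
    φps p k ((p : PowerSeries (K₀ p k)) ^ j) = (p : PowerSeries (K₀ p k)) ^ j := by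
  rw [pPS_eq, ← map_pow, phips_C]
  congr 1
  rw [map_pow, map_natCast]

theorem memE_map (f : SR p k) : memE p k 0 (PowerSeries.map (ι p k) f) := by
  refine ⟨0, ?_⟩
  have h : PowerSeries.C (R := K₀ p k) ((p : K₀ p k) ^ 0) * PowerSeries.map (ι p k) f
      = PowerSeries.map (ι p k) f := by rw [pow_zero, map_one, one_mul]
  rw [h]
  exact memS_map p k f

theorem memE_X_pow (n : ℕ) : memE p k 0 ((X : PowerSeries (K₀ p k)) ^ n) := by
  have h : (X : PowerSeries (K₀ p k)) ^ n = PowerSeries.map (ι p k) ((X : SR p k) ^ n) := by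
    rw [map_pow, PowerSeries.map_X]
  rw [h]; exact memE_map p k _

theorem memE_p_pow (j : ℕ) : memE p k 0 ((p : PowerSeries (K₀ p k)) ^ j) := by
  have h : (p : PowerSeries (K₀ p k)) ^ j = PowerSeries.map (ι p k) ((p : SR p k) ^ j) := by
    rw [map_pow, map_natCast]
  rw [h]; exact memE_map p k _

theorem R_smul_eq {d : ℕ} (r : SR p k) (x : Fin d → PowerSeries (K₀ p k)) :
    r • x = (PowerSeries.map (ι p k) r) • x := rfl

namespace Setup

variable {p} {k} {d : ℕ} (S : Setup p k d)

theorem Phi_X_pow_smul (n : ℕ) {x : Fin d → PowerSeries (K₀ p k)} (hx : x ∈ Ev p k d) :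
    S.Φ (((X : SR p k) ^ n) • x) = ((X : SR p k) ^ (p * n)) • S.Φ x := by
  have h1 : ((X : SR p k) ^ n) • x = ((X : PowerSeries (K₀ p k)) ^ n) • x := by
    rw [R_smul_eq, map_pow, PowerSeries.map_X]
  have h2 : ((X : SR p k) ^ (p * n)) • S.Φ x
      = ((X : PowerSeries (K₀ p k)) ^ (p * n)) • S.Φ x := by
    rw [R_smul_eq, map_pow, PowerSeries.map_X]
  rw [h1, S.hΦsemi _ x (memE_X_pow p k n) hx, phips_X_pow, h2]

theorem Phi_p_pow_smul (j : ℕ) {x : Fin d → PowerSeries (K₀ p k)} (hx : x ∈ Ev p k d) :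
    S.Φ (((p : SR p k) ^ j) • x) = ((p : SR p k) ^ j) • S.Φ x := by
  have h1 : ((p : SR p k) ^ j) • x = ((p : PowerSeries (K₀ p k)) ^ j) • x := by
    rw [R_smul_eq, map_pow, map_natCast]
  have h2 : ((p : SR p k) ^ j) • S.Φ x
      = ((p : PowerSeries (K₀ p k)) ^ j) • S.Φ x := by
    rw [R_smul_eq, map_pow, map_natCast]
  rw [h1, S.hΦsemi _ x (memE_p_pow p k j) hx, phips_p_pow, h2]

/-- The chain `P s = usat (M s)`. -/
def P (s : ℕ) : Submodule (SR p k) (Fin d → PowerSeries (K₀ p k)) :=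
  usat p k (S.M s)

theorem M_le_P (s : ℕ) : S.M s ≤ S.P s := le_usat p k _

theorem P_mono {a b : ℕ} (ha : 1 ≤ a) (hab : a ≤ b) : S.P a ≤ S.P b :=
  usat_mono p k (S.M_mono ha hab)

theorem P_le_Ev (s : ℕ) (hs : 1 ≤ s) : S.P s ≤ Ev p k d :=
  usat_le_Ev p k (S.M_le_Ev s hs)

theorem usat_P_le (s : ℕ) : usat p k (S.P s) ≤ S.P s := usat_usat p k

theorem Phi_P_mem (s : ℕ) (hs : 1 ≤ s) {x : Fin d → PowerSeries (K₀ p k)}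
    (hx : x ∈ S.P s) : S.Φ x ∈ S.P (s + 1) := by
  obtain ⟨n, hn⟩ := hx
  refine ⟨p * n, ?_⟩
  rw [← S.Phi_X_pow_smul n (S.P_le_Ev s hs ⟨n, hn⟩)]
  exact S.Phi_M_mem s hs hn

theorem p_c0_smul_P (s : ℕ) (hs : 1 ≤ s) {x : Fin d → PowerSeries (K₀ p k)}
    (hx : x ∈ S.P s) : ((p : SR p k) ^ S.c₀) • x ∈ S.P 1 := by
  obtain ⟨n, hn⟩ := hx
  refine ⟨n, ?_⟩
  rw [smul_comm]
  exact S.hNM _ (S.M_le_N s hs hn)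

theorem P_unfold (s : ℕ) (hs : 1 ≤ s) {x : Fin d → PowerSeries (K₀ p k)}
    (hx : x ∈ S.P (s + 1)) : ∃ n, ((X : SR p k) ^ n) • x ∈ S.A s := by
  obtain ⟨a, ha⟩ := hx
  rw [S.hrec' s hs] at ha
  obtain ⟨hE, b, hpb, hub⟩ := (mem_MaxSub).1 ha
  refine ⟨a + b, ?_⟩
  rw [pow_add, mul_comm, mul_smul]
  exact hub

end Setup
end Stmt13
namespace Stmt13
set_option linter.unusedSectionVars false
set_option maxHeartbeats 1000000
set_option synthInstance.maxHeartbeats 1000000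
open PowerSeries

namespace Setup

variable {p : ℕ} [hp : Fact p.Prime] {k : Type} [Field k] [CharP k p] [PerfectRing k p]
variable {d : ℕ} (S : Setup p k d)

/-- The stalling condition at level `t` with defect at level `D`. -/
def St (t D : ℕ) : Prop :=
  ∀ x ∈ S.P (t + 1), ∃ n, ((X : SR p k) ^ n) • x ∈ S.P t ⊔ psmul p k 1 (S.P D)

theorem St_prop {t D : ℕ} (ht : 1 ≤ t) (hD : 1 ≤ D) (h : S.St t D) :
    S.St (t + 1) (D + 1) := by
  intro x hx
  obtain ⟨m, hm⟩ := S.P_unfold (t + 1) (by omega) hx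
  obtain ⟨y, hy, w, hw, hyw⟩ := Submodule.mem_sup.1 hm
  have hspan : ∀ w ∈ Submodule.span (SR p k) (S.Φ '' (S.M (t + 1) : Set _)),
      ∃ n, ((X : SR p k) ^ n) • w ∈ S.P (t + 1) ⊔ psmul p k 1 (S.P (D + 1)) := by
    intro w hw
    induction hw using Submodule.span_induction with
    | mem w hwmem =>
        obtain ⟨x', hx', rfl⟩ := hwmem
        obtain ⟨n, hn⟩ := h x' (S.M_le_P (t + 1) hx')
        obtain ⟨y', hy', q, hq, hyq⟩ := Submodule.mem_sup.1 hn
        obtain ⟨z, hz, rfl⟩ := hq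
        refine ⟨p * n, ?_⟩
        have hxE : x' ∈ Ev p k d := S.M_le_Ev (t + 1) (by omega) hx'
        have hE1 : ((X : SR p k) ^ (p * n)) • S.Φ x'
            = S.Φ (((X : SR p k) ^ n) • x') := (S.Phi_X_pow_smul n hxE).symm
        rw [hE1, ← hyq]
        have hyE : y' ∈ Ev p k d := S.P_le_Ev t ht hy'
        have hzE : z ∈ Ev p k d := S.P_le_Ev D hD hz
        have hpzE : ((p : SR p k) ^ 1) • z ∈ Ev p k d := (Ev p k d).smul_mem _ hzE
        rw [S.hΦadd y' _ hyE hpzE, S.Phi_p_pow_smul 1 hzE]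
        refine Submodule.add_mem _ ?_ ?_
        · exact Submodule.mem_sup_left (S.Phi_P_mem t ht hy')
        · exact Submodule.mem_sup_right ⟨S.Φ z, S.Phi_P_mem D hD hz, rfl⟩
    | zero => exact ⟨0, by rw [smul_zero]; exact Submodule.zero_mem _⟩
    | add w1 w2 h1 h2 ih1 ih2 =>
        obtain ⟨n1, hn1⟩ := ih1
        obtain ⟨n2, hn2⟩ := ih2
        refine ⟨n1 + n2, ?_⟩
        rw [smul_add]
        refine Submodule.add_mem _ ?_ ?_
        · rw [add_comm n1 n2, pow_add, mul_smul]; exact Submodule.smul_mem _ _ hn1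
        · rw [pow_add, mul_smul]; exact Submodule.smul_mem _ _ hn2
    | smul r w hwmem ih =>
        obtain ⟨n, hn⟩ := ih
        exact ⟨n, by rw [smul_comm]; exact Submodule.smul_mem _ _ hn⟩
  obtain ⟨nw, hnw⟩ := hspan w hw
  refine ⟨m + nw, ?_⟩
  have he : ((X : SR p k) ^ (m + nw)) • x
      = ((X : SR p k) ^ nw) • (((X : SR p k) ^ m) • x) := by
    rw [← mul_smul, ← pow_add, add_comm]
  rw [he, ← hyw, smul_add]
  refine Submodule.add_mem _ ?_ hnw
  exact Submodule.mem_sup_left (Submodule.smul_mem _ _ (S.M_le_P (t + 1) hy))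

theorem St_all {t : ℕ} (ht : 1 ≤ t) (h : S.St t (d + 1)) :
    ∀ j, S.St (t + j) (d + 1 + j) := by
  intro j
  induction j with
  | zero => exact h
  | succ j ih => exact S.St_prop (t := t + j) (D := d + 1 + j) (by omega) (by omega) ih

theorem Desc {t : ℕ} (ht : 1 ≤ t) (hS : S.St t (d + 1)) :
    ∀ a, t ≤ a → ∀ z ∈ S.P a, ∃ n T, 1 ≤ T ∧
      ((X : SR p k) ^ n) • z ∈ S.P t ⊔ psmul p k 1 (S.P T) := by
  intro a ha
  induction a, ha using Nat.le_induction with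
  | base =>
      intro z hz
      exact ⟨0, 1, le_refl 1, by
        rw [pow_zero, one_smul]; exact Submodule.mem_sup_left hz⟩
  | succ a ha ih =>
      intro z hz
      have hst : S.St a (d + 1 + (a - t)) := by
        have h2 := S.St_all ht hS (a - t)
        rwa [show t + (a - t) = a by omega] at h2
      obtain ⟨n, hn⟩ := hst z hz
      obtain ⟨y, hy, q, hq, hyq⟩ := Submodule.mem_sup.1 hn
      obtain ⟨m, T', hT', hm⟩ := ih y hy
      refine ⟨n + m, max T' (d + 1 + (a - t)), by omega, ?_⟩
      have he : ((X : SR p k) ^ (n + m)) • z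
          = ((X : SR p k) ^ m) • (((X : SR p k) ^ n) • z) := by
        rw [← mul_smul, ← pow_add, add_comm]
      rw [he, ← hyq, smul_add]
      refine Submodule.add_mem _ ?_ ?_
      · refine (sup_le_sup_left (psmul_mono p k 1
          (S.P_mono hT' (le_max_left _ _))) _) hm
      · refine Submodule.mem_sup_right ?_
        refine (psmul_mono p k 1 (S.P_mono (by omega) (le_max_right _ _))) ?_
        exact Submodule.smul_mem _ _ hq

theorem ClaimJ {t : ℕ} (ht : 1 ≤ t) (hS : S.St t (d + 1)) :
    ∀ j, ∀ x ∈ S.P (t + 1), ∃ n T, 1 ≤ T ∧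
      ((X : SR p k) ^ n) • x ∈ S.P t ⊔ psmul p k j (S.P T) := by
  intro j
  induction j with
  | zero =>
      intro x hx
      refine ⟨0, t + 1, by omega, ?_⟩
      rw [pow_zero, one_smul]
      exact Submodule.mem_sup_right ⟨x, hx, by rw [pow_zero, one_smul]⟩
  | succ j ih =>
      intro x hx
      obtain ⟨n, T, hT, hn⟩ := ih x hx
      obtain ⟨y, hy, q, hq, hyq⟩ := Submodule.mem_sup.1 hn
      obtain ⟨z, hz, rfl⟩ := hq
      have hzmax : z ∈ S.P (max T t) := S.P_mono hT (le_max_left _ _) hz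
      obtain ⟨m, T2, hT2, hm⟩ := S.Desc ht hS (max T t) (le_max_right _ _) z hzmax
      obtain ⟨w, hw, q2, hq2, hwq⟩ := Submodule.mem_sup.1 hm
      obtain ⟨v, hv, rfl⟩ := hq2
      refine ⟨n + m, T2, hT2, ?_⟩
      have he : ((X : SR p k) ^ (n + m)) • x
          = ((X : SR p k) ^ m) • (((X : SR p k) ^ n) • x) := by
        rw [← mul_smul, ← pow_add, add_comm]
      rw [he, ← hyq, smul_add]
      refine Submodule.add_mem _ (Submodule.mem_sup_left (Submodule.smul_mem _ _ hy)) ?_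
      have he2 : ((X : SR p k) ^ m) • (((p : SR p k) ^ j) • z)
          = ((p : SR p k) ^ j) • (((X : SR p k) ^ m) • z) := smul_comm _ _ _
      rw [he2, ← hwq, smul_add]
      refine Submodule.add_mem _ (Submodule.mem_sup_left (Submodule.smul_mem _ _ hw)) ?_
      refine Submodule.mem_sup_right ?_
      refine ⟨v, hv, ?_⟩
      rw [smul_smul, ← pow_add]

theorem collapse {t : ℕ} (ht : 1 ≤ t) (hS : S.St t (d + 1)) :
    S.P (t + 1) = S.P t := by
  refine le_antisymm ?_ (S.P_mono ht (by omega))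
  intro x hx
  obtain ⟨n, T, hT, hn⟩ := S.ClaimJ ht hS S.c₀ x hx
  have hsub : S.P t ⊔ psmul p k S.c₀ (S.P T) ≤ S.P t := by
    refine sup_le le_rfl ?_
    rintro _ ⟨z, hz, rfl⟩
    exact S.P_mono (le_refl 1) ht (S.p_c0_smul_P T hT hz)
  exact S.usat_P_le t ⟨n, hsub hn⟩

end Setup
end Stmt13
namespace Stmt13
set_option linter.unusedSectionVars false
set_option maxHeartbeats 1000000
set_option synthInstance.maxHeartbeats 1000000
open PowerSeries

variable (p : ℕ) [hp : Fact p.Prime] (k : Type) [Field k] [CharP k p] [PerfectRing k p]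

theorem XSR_ne_zero : (X : SR p k) ≠ 0 := PowerSeries.X_ne_zero

theorem psmul_psmul {d : ℕ} (i : ℕ) (A : Submodule (SR p k) (Fin d → PowerSeries (K₀ p k))) :
    psmul p k i (psmul p k 1 A) ≤ psmul p k (i + 1) A := by
  rintro _ ⟨_, ⟨z, hz, rfl⟩, rfl⟩
  exact ⟨z, hz, by rw [smul_smul, ← pow_add]⟩

namespace Setup

variable {p} {k} {d : ℕ} (S : Setup p k d)

theorem P1_not_sub : ¬ (S.P 1 ≤ psmul p k 1 (S.P (d + 1))) := by
  intro hsub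
  -- Step A
  have hA : ∀ t, 1 ≤ t → S.P t ≤ psmul p k 1 (S.P (d + t)) := by
    intro t ht
    induction t, ht using Nat.le_induction with
    | base => exact hsub
    | succ t ht ih =>
        intro x hx
        obtain ⟨n, hn⟩ := S.P_unfold t ht hx
        have hAle : S.A t ≤ psmul p k 1 (S.P (d + (t + 1))) := by
          refine sup_le ?_ ?_
          · exact le_trans (S.M_le_P t) (le_trans ih
              (psmul_mono p k 1 (S.P_mono (by omega) (by omega))))
          · rw [Submodule.span_le]
            rintro _ ⟨x', hx', rfl⟩
            obtain ⟨z, hz, rfl⟩ := ih (S.M_le_P t hx')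
            have hzE : z ∈ Ev p k d := S.P_le_Ev (d + t) (by omega) hz
            rw [S.Phi_p_pow_smul 1 hzE]
            exact ⟨S.Φ z, by
              have := S.Phi_P_mem (d + t) (by omega) hz
              rwa [show d + t + 1 = d + (t + 1) by omega] at this, rfl⟩
        exact usat_psmul p k (S.usat_P_le (d + (t + 1))) (hAle hn)
  -- Step B
  have hB : ∀ i : ℕ, ∃ a, 1 ≤ a ∧ S.P 1 ≤ psmul p k i (S.P a) := by
    intro i
    induction i with
    | zero =>
        exact ⟨1, le_refl 1, fun x hx => ⟨x, hx, by rw [pow_zero, one_smul]⟩⟩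
    | succ i ih =>
        obtain ⟨a, ha, hle⟩ := ih
        refine ⟨d + a, by omega, ?_⟩
        refine le_trans hle (le_trans (psmul_mono p k i (hA a ha)) ?_)
        exact psmul_psmul p k i _
  -- Step C
  have hC : S.P 1 ≤ psmul p k 1 (S.P 1) := by
    obtain ⟨a, ha, hle⟩ := hB (S.c₀ + 1)
    intro x hx
    obtain ⟨z, hz, rfl⟩ := hle hx
    refine ⟨((p : SR p k) ^ S.c₀) • z, S.p_c0_smul_P a ha hz, ?_⟩
    rw [smul_smul, ← pow_add]
    congr 2
    omega
  -- Step D : contradiction using the basis of M 1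
  set i0 : Fin d := ⟨0, S.hd⟩ with hi0
  have hx1 : ((S.bas i0 : ↥(S.M 1)) : Fin d → PowerSeries (K₀ p k)) ∈ S.P 1 :=
    S.M_le_P 1 (S.bas i0).2
  obtain ⟨y, hy, hxy⟩ := hC hx1
  obtain ⟨n, hn⟩ := hy
  set E2 : ↥(S.M 1) := ⟨((X : SR p k) ^ n) • y, hn⟩ with hE2
  set E1 : ↥(S.M 1) := ((X : SR p k) ^ n) • (S.bas i0) with hE1
  have hkey : E1 = ((p : SR p k) ^ 1) • E2 := by
    apply Subtype.ext
    show ((X : SR p k) ^ n) • ((S.bas i0 : ↥(S.M 1)) : Fin d → PowerSeries (K₀ p k))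
      = ((p : SR p k) ^ 1) • (((X : SR p k) ^ n) • y)
    rw [← hxy, smul_comm]
  have hrepr := congrArg S.bas.repr hkey
  rw [hE1, map_smul, map_smul, Module.Basis.repr_self] at hrepr
  have hat := DFunLike.congr_fun hrepr i0
  rw [Finsupp.smul_apply, Finsupp.smul_apply, Finsupp.single_eq_same,
    smul_eq_mul, smul_eq_mul, mul_one] at hat
  have hcoeff := congrArg (PowerSeries.coeff (R := WittVector p k) n) hat
  rw [coeff_p_pow_mul, PowerSeries.coeff_X_pow, if_pos rfl, pow_one] at hcoeff
  exact (WittVector.irreducible p).not_isUnit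
    (IsUnit.of_mul_eq_one _ hcoeff.symm)

theorem exists_base : ∃ x, x ∈ S.P 1 ∧
    ∀ n, ((X : SR p k) ^ n) • x ∉ psmul p k 1 (S.P (d + 1)) := by
  obtain ⟨x, hx1, hx2⟩ := SetLike.not_le_iff_exists.1 (S.P1_not_sub)
  refine ⟨x, hx1, fun n hn => hx2 ?_⟩
  exact usat_psmul p k (S.usat_P_le (d + 1)) hn

theorem no_stall {t : ℕ} (ht : 1 ≤ t) (hne : S.P (t + 1) ≠ S.P t) :
    ∃ x, x ∈ S.P (t + 1) ∧
      ∀ n, ((X : SR p k) ^ n) • x ∉ S.P t ⊔ psmul p k 1 (S.P (d + 1)) := by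
  by_contra h
  push_neg at h
  have hSt : S.St t (d + 1) := by
    intro x hx
    obtain ⟨n, hn⟩ := h x hx
    exact ⟨n, hn⟩
  exact hne (S.collapse ht hSt)

end Setup
end Stmt13
namespace Stmt13
set_option linter.unusedSectionVars false
set_option maxHeartbeats 1000000
set_option synthInstance.maxHeartbeats 1000000
open PowerSeries

namespace Setup

variable {p : ℕ} [hp : Fact p.Prime] {k : Type} [Field k] [CharP k p] [PerfectRing k p]
variable {d : ℕ} (S : Setup p k d)

/-- The forbidden modules for the witnesses. -/
def Dmod : ℕ → Submodule (SR p k) (Fin d → PowerSeries (K₀ p k))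
  | 0 => psmul p k 1 (S.P (d + 1))
  | (t + 1) => S.P (t + 1) ⊔ psmul p k 1 (S.P (d + 1))

theorem psmul_le_Dmod (t : ℕ) : psmul p k 1 (S.P (d + 1)) ≤ S.Dmod t := by
  cases t with
  | zero => exact le_rfl
  | succ t => exact le_sup_right

theorem P_le_Dmod {a t : ℕ} (ha : 1 ≤ a) (hat : a ≤ t) : S.P a ≤ S.Dmod t := by
  cases t with
  | zero => omega
  | succ t => exact le_trans (S.P_mono ha hat) le_sup_left

theorem tau_case (w : Fin (d + 1) → (Fin d → PowerSeries (K₀ p k)))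
    (hw1 : ∀ s : Fin (d + 1), w s ∈ S.P ((s : ℕ) + 1))
    (hw2 : ∀ (s : Fin (d + 1)) (n : ℕ), ((X : SR p k) ^ n) • w s ∉ S.Dmod (s : ℕ))
    (c : Fin (d + 1) → SR p k) (hrel : ∑ s, c s • w s = 0)
    (τ : Fin (d + 1)) (hτ : ¬ ((p : SR p k) ∣ c τ))
    (hgt : ∀ s, τ < s → (p : SR p k) ∣ c s) : False := by
  have hτlt := τ.isLt
  have hmem : c τ • w τ ∈ S.Dmod (τ : ℕ) := by
    have hadd := Finset.add_sum_erase Finset.univ (fun s => c s • w s) (Finset.mem_univ τ)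
    rw [hrel] at hadd
    have hsplit : c τ • w τ = - ∑ s ∈ Finset.univ.erase τ, c s • w s :=
      eq_neg_of_add_eq_zero_left hadd
    rw [hsplit]
    refine Submodule.neg_mem _ (Submodule.sum_mem _ ?_)
    intro s hs
    have hslt := s.isLt
    have hsne : s ≠ τ := Finset.ne_of_mem_erase hs
    rcases lt_or_gt_of_ne hsne with hlt | hgt'
    · have hlt' : (s : ℕ) < (τ : ℕ) := hlt
      exact S.P_le_Dmod (a := (s : ℕ) + 1) (by omega) (by omega)
        (Submodule.smul_mem _ _ (hw1 s))
    · obtain ⟨e, he⟩ := hgt s hgt'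
      have h2 : c s • w s = ((p : SR p k) ^ 1) • (e • w s) := by
        rw [he, pow_one, mul_smul]
      rw [h2]
      exact S.psmul_le_Dmod _ ⟨e • w s,
        Submodule.smul_mem _ _ (S.P_mono (by omega) (by omega) (hw1 s)), rfl⟩
  obtain ⟨e, γ, δ, hγu, hdec⟩ := SR_unit_decomp p k hτ
  have hδmem : ((p : SR p k) * δ) • w τ ∈ S.Dmod (τ : ℕ) := by
    have h2 : ((p : SR p k) * δ) • w τ = ((p : SR p k) ^ 1) • (δ • w τ) := by
      rw [pow_one, mul_smul]
    rw [h2]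
    exact S.psmul_le_Dmod _ ⟨δ • w τ,
      Submodule.smul_mem _ _ (S.P_mono (by omega) (by omega) (hw1 τ)), rfl⟩
  have h2 : (γ * (X : SR p k) ^ e) • w τ ∈ S.Dmod (τ : ℕ) := by
    have he2 : (γ * (X : SR p k) ^ e) • w τ = c τ • w τ - ((p : SR p k) * δ) • w τ := by
      rw [hdec, add_smul, mul_comm γ ((X : SR p k) ^ e)]
      abel
    rw [he2]
    exact Submodule.sub_mem _ hmem hδmem
  obtain ⟨U, rfl⟩ := hγu
  have h3 : ((X : SR p k) ^ e) • w τ ∈ S.Dmod (τ : ℕ) := by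
    have h4 := Submodule.smul_mem _ ((U⁻¹ : (SR p k)ˣ) : SR p k) h2
    rwa [smul_smul, ← mul_assoc, Units.inv_mul, one_mul] at h4
  exact hw2 τ e h3

theorem rel_false (w : Fin (d + 1) → (Fin d → PowerSeries (K₀ p k)))
    (hw1 : ∀ s : Fin (d + 1), w s ∈ S.P ((s : ℕ) + 1))
    (hw2 : ∀ (s : Fin (d + 1)) (n : ℕ), ((X : SR p k) ^ n) • w s ∉ S.Dmod (s : ℕ))
    (c : Fin (d + 1) → SR p k) (hrel : ∑ s, c s • w s = 0)
    (s₀ : Fin (d + 1)) (h0 : c s₀ ≠ 0) : False := by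
  classical
  have aux : ∀ (Jb : ℕ) (c : Fin (d + 1) → SR p k), (∑ s, c s • w s = 0) →
      ∀ s₀, c s₀ ≠ 0 → ¬ ((p : SR p k) ^ Jb ∣ c s₀) → False := by
    intro Jb
    induction Jb with
    | zero =>
        intro c _ s₀ _ hnd
        exact hnd (by rw [pow_zero]; exact one_dvd _)
    | succ Jb ih =>
        intro c hrel s₀ h0 hnd
        by_cases hall : ∀ s, (p : SR p k) ∣ c s
        · choose e he using hall
          have hrel2 : ∑ s, e s • w s = 0 := by
            apply smul_cancel p k (r := (p : SR p k)) (pSR_ne_zero p k)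
            rw [smul_zero, Finset.smul_sum, ← hrel]
            refine Finset.sum_congr rfl fun s _ => ?_
            rw [smul_smul, ← he s]
          refine ih e hrel2 s₀ ?_ ?_
          · intro h0'; exact h0 (by rw [he s₀, h0', mul_zero])
          · rintro ⟨q, hq⟩
            exact hnd ⟨q, by rw [he s₀, hq, pow_succ]; ring⟩
        · push_neg at hall
          obtain ⟨s₁, hs₁⟩ := hall
          have hne : (Finset.univ.filter (fun s => ¬ (p : SR p k) ∣ c s)).Nonempty :=
            ⟨s₁, Finset.mem_filter.2 ⟨Finset.mem_univ _, hs₁⟩⟩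
          set τ := (Finset.univ.filter (fun s => ¬ (p : SR p k) ∣ c s)).max' hne with hτd
          have hτmem := Finset.mem_filter.1
            ((Finset.univ.filter (fun s => ¬ (p : SR p k) ∣ c s)).max'_mem hne)
          refine S.tau_case w hw1 hw2 c hrel τ hτmem.2 ?_
          intro s hgt'
          by_contra hnds
          have hsT : s ∈ Finset.univ.filter (fun s => ¬ (p : SR p k) ∣ c s) :=
            Finset.mem_filter.2 ⟨Finset.mem_univ _, hnds⟩
          have hle := Finset.le_max' _ s hsT
          exact absurd hgt' (not_lt.2 hle)
  obtain ⟨J, c', hfac, hnd⟩ := SR_exists_p_factor p k h0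
  have hbound : ¬ ((p : SR p k) ^ (J + 1) ∣ c s₀) := by
    rintro ⟨q, hq⟩
    apply hnd
    have h2 : (p : SR p k) ^ J * c' = (p : SR p k) ^ J * ((p : SR p k) * q) := by
      rw [← hfac, hq, pow_succ]; ring
    exact ⟨q, mul_left_cancel₀ (pSR_pow_ne_zero p k J) h2⟩
  exact aux (J + 1) c hrel s₀ h0 hbound

theorem exists_stall : ∃ t, 1 ≤ t ∧ t ≤ d ∧ S.P (t + 1) = S.P t := by
  classical
  by_contra hcon
  push_neg at hcon
  have hws : ∀ s : Fin (d + 1), ∃ x, x ∈ S.P ((s : ℕ) + 1) ∧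
      ∀ n, ((X : SR p k) ^ n) • x ∉ S.Dmod (s : ℕ) := by
    intro s
    have hsd : (s : ℕ) ≤ d := by have := s.isLt; omega
    by_cases hs0 : (s : ℕ) = 0
    · rw [hs0]
      exact S.exists_base
    · obtain ⟨t, ht⟩ := Nat.exists_eq_succ_of_ne_zero hs0
      rw [ht]
      exact S.no_stall (by omega) (hcon (t + 1) (by omega) (by omega))
  choose w hw1 hw2 using hws
  have hscale : ∀ s : Fin (d + 1),
      ∃ n, ((X : SR p k) ^ n) • (((p : SR p k) ^ S.c₀) • w s) ∈ S.M 1 :=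
    fun s => S.p_c0_smul_P ((s : ℕ) + 1) (by omega) (hw1 s)
  choose ns hns using hscale
  set v : Fin (d + 1) → ↥(S.M 1) := fun s =>
    ⟨(((X : SR p k) ^ (ns s)) * ((p : SR p k) ^ S.c₀)) • w s, by
      rw [mul_smul]; exact hns s⟩ with hv
  have hnli : ¬ LinearIndependent (SR p k) v := by
    intro hli
    have hcard := Module.Basis.card_le_card_of_linearIndependent S.bas hli
    simp only [Fintype.card_fin] at hcard
    omega
  obtain ⟨g, hgsum, s0, hg0⟩ := Fintype.not_linearIndependent_iff.1 hnli
  have hrel : ∑ s, (g s * (((X : SR p k) ^ (ns s)) * ((p : SR p k) ^ S.c₀))) • w s = 0 := by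
    have hc := congrArg (Submodule.subtype (S.M 1)) hgsum
    rw [map_sum, map_zero] at hc
    rw [← hc]
    refine Finset.sum_congr rfl fun s _ => ?_
    rw [map_smul]
    show (g s * (((X : SR p k) ^ (ns s)) * ((p : SR p k) ^ S.c₀))) • w s
      = g s • ((((X : SR p k) ^ (ns s)) * ((p : SR p k) ^ S.c₀)) • w s)
    rw [smul_smul]
  refine S.rel_false w hw1 hw2 _ hrel s0 ?_
  exact mul_ne_zero hg0 (mul_ne_zero (pow_ne_zero _ (XSR_ne_zero p k))
    (pSR_pow_ne_zero p k _))

theorem M_eq_of_P_eq {t : ℕ} (ht : 1 ≤ t) (hP : S.P (t + 1) = S.P t) :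
    S.M (t + 1) = S.M t := by
  refine le_antisymm ?_ (S.M_le_succ t ht)
  intro x hx
  have hxP : x ∈ S.P t := hP ▸ S.M_le_P (t + 1) hx
  obtain ⟨m, hm⟩ := hxP
  rw [S.hrec' t ht] at hx
  obtain ⟨hE, n, hpn, hun⟩ := (mem_MaxSub).1 hx
  have hpc : ((p : SR p k) ^ (S.c₀ + n)) • x ∈ S.M 1 := by
    rw [pow_add, mul_smul]
    exact S.hNM _ (S.A_le_N t ht hpn)
  rcases Nat.exists_eq_add_of_le ht with ⟨r, hr⟩
  cases r with
  | zero =>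
      have ht1 : t = 1 := by omega
      subst ht1
      exact mem_of_mixed_sat p k S.bas hpc hm
  | succ r =>
      have htr : t = (r + 1) + 1 := by omega
      have hr1 : 1 ≤ r + 1 := by omega
      have hMt : S.M t = MaxSub p k d (S.A (r + 1)) := by
        rw [htr]; exact S.hrec' (r + 1) hr1
      rw [hMt]
      have hpc' : ((p : SR p k) ^ (S.c₀ + n)) • x ∈ MaxSub p k d (S.A (r + 1)) := by
        rw [← hMt]; exact S.M_mono (le_refl 1) ht hpc
      have hm' : ((X : SR p k) ^ m) • x ∈ MaxSub p k d (S.A (r + 1)) := by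
        rw [← hMt]; exact hm
      obtain ⟨_, b₁, h1p, _⟩ := (mem_MaxSub).1 hpc'
      obtain ⟨_, b₂, _, h2u⟩ := (mem_MaxSub).1 hm'
      have h1p' : ((p : SR p k) ^ (b₁ + (S.c₀ + n))) • x ∈ S.A (r + 1) := by
        rw [pow_add, mul_smul]; exact h1p
      have h2u' : ((X : SR p k) ^ (b₂ + m)) • x ∈ S.A (r + 1) := by
        rw [pow_add, mul_smul]; exact h2u
      refine (mem_MaxSub).2 ⟨hE, max (b₁ + (S.c₀ + n)) (b₂ + m), ?_, ?_⟩
      · exact pad_pow_smul_mem (le_max_left _ _) h1p'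
      · exact pad_pow_smul_mem (le_max_right _ _) h2u'

theorem M_const {t : ℕ} (ht : 1 ≤ t) (h : S.M (t + 1) = S.M t) :
    ∀ s, t ≤ s → S.M s = S.M t := by
  intro s hs
  induction s, hs using Nat.le_induction with
  | base => rfl
  | succ s hs ih =>
      have hA : S.A s = S.A t := by
        unfold A
        rw [ih]
      rw [S.hrec' s (by omega), hA, ← S.hrec' t ht, h]

theorem main : ∀ s, d ≤ s → S.M s = S.M d := by
  obtain ⟨t, ht1, htd, hP⟩ := S.exists_stall
  have hMt := S.M_eq_of_P_eq ht1 hP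
  have hconst := S.M_const ht1 hMt
  intro s hs
  rw [hconst s (by omega), hconst d (by omega)]

end Setup
end Stmt13
theorem stmt13 (p : ℕ) [Fact p.Prime] (k : Type) [Field k] [CharP k p] [PerfectRing k p]
    (d : ℕ) (hd : 1 ≤ d)
    (Φ : (Fin d → PowerSeries (K₀ p k)) → (Fin d → PowerSeries (K₀ p k)))
    (hΦE : ∀ x, (∀ j, memE p k 0 (x j)) → ∀ j, memE p k 0 (Φ x j))
    (hΦadd : ∀ x y, (∀ j, memE p k 0 (x j)) → (∀ j, memE p k 0 (y j)) →
      Φ (x + y) = Φ x + Φ y)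
    (hΦsemi : ∀ (s : PowerSeries (K₀ p k)) x, memE p k 0 s → (∀ j, memE p k 0 (x j)) →
      Φ (s • x) = φps p k s • Φ x)
    (M : ℕ → Submodule (SR p k) (Fin d → PowerSeries (K₀ p k)))
    (hM1E : ∀ x ∈ M 1, ∀ j, memE p k 0 (x j))
    (hM1free : Nonempty (Module.Basis (Fin d) (SR p k) (M 1)))
    (c₀ : ℕ) (N : Submodule (SR p k) (Fin d → PowerSeries (K₀ p k)))
    (hNE : ∀ x ∈ N, ∀ j, memE p k 0 (x j))
    (hNfree : Module.Free (SR p k) N)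
    (hNstable : ∀ x ∈ N, Φ x ∈ N)
    (hMN : M 1 ≤ N)
    (hNM : ∀ x ∈ N, ((p : SR p k) ^ c₀) • x ∈ M 1)
    (hrec : ∀ s : ℕ, 1 ≤ s →
      M (s + 1) = MaxSub p k d (M s ⊔ Submodule.span (SR p k) (Φ '' (M s : Set _)))) :
    ∀ s : ℕ, d ≤ s → M s = M d := by
  intro s hs
  let S : Stmt13.Setup p k d :=
    { hd := hd, Φ := Φ, hΦE := hΦE, hΦadd := hΦadd, hΦsemi := hΦsemi,
      M := M, hM1E := hM1E, bas := Classical.choice hM1free,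
      c₀ := c₀, N := N, hNE := hNE, hNfree := hNfree, hNstable := hNstable,
      hMN := hMN, hNM := hNM, hrec := hrec }
  exact S.main s hs
end
end
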